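/- arXiv:1810.00254 — 4 statements merged into one kernel-verified Lean document; each statement's English description precedes it below -/
import Mathlib

section
/- Let N be an odd Niemeier lattice of minimum norm 2 whose two even neighbors have root sublattices isometric to D₂₄ and A₂₄ respectively. Then N does not contain a sublattice isometric to L⁺. -/
open scoped BigOperators

namespace Niemeier

variable {V : Type*} [AddCommGroup V] [Module ℚ V]
variable {W : Type*} [AddCommGroup W] [Module ℚ W]

/-- The dual lattice of a `ℤ`-submodule `L` of a rational vector space `V` with respect to the
bilinear form `B`: all vectors pairing integrally with every element of `L`. -/
def dualLattice (B : V →ₗ[ℚ] V →ₗ[ℚ] ℚ) (L : Submodule ℤ V) : Submodule ℤ V where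
  carrier := {x | ∀ y ∈ L, ∃ n : ℤ, B x y = n}
  zero_mem' := by
    intro y hy
    exact ⟨0, by simp⟩
  add_mem' := by
    intro a b ha hb y hy
    obtain ⟨m, hm⟩ := ha y hy
    obtain ⟨k, hk⟩ := hb y hy
    exact ⟨m + k, by push_cast [map_add, LinearMap.add_apply, hm, hk]; rfl⟩
  smul_mem' := by
    intro c x hx y hy
    obtain ⟨m, hm⟩ := hx y hy
    refine ⟨c * m, ?_⟩
    have h1 : B (c • x) y = c • (B x y) := by
      rw [map_zsmul]; rfl
    rw [h1, hm, zsmul_eq_mul]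
    push_cast
    ring

/-- `B` is a symmetric positive-definite bilinear form. -/
def IsPosDefSymm (B : V →ₗ[ℚ] V →ₗ[ℚ] ℚ) : Prop :=
  (∀ x y, B x y = B y x) ∧ ∀ x : V, x ≠ 0 → 0 < B x x

/-- `L` is a (full-rank, integral) lattice in `V` with respect to `B`. -/
structure IsIntegralLattice (B : V →ₗ[ℚ] V →ₗ[ℚ] ℚ) (L : Submodule ℤ V) : Prop where
  fg : L.FG
  spans : Submodule.span ℚ (L : Set V) = ⊤
  integral : L ≤ dualLattice B L

/-- `L` is unimodular: it coincides with its dual lattice. -/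
def IsUnimodular (B : V →ₗ[ℚ] V →ₗ[ℚ] ℚ) (L : Submodule ℤ V) : Prop :=
  L = dualLattice B L

/-- `L` is an even lattice: all norms are even integers. -/
def IsEvenLat (B : V →ₗ[ℚ] V →ₗ[ℚ] ℚ) (L : Submodule ℤ V) : Prop :=
  ∀ v ∈ L, ∃ n : ℤ, B v v = 2 * n

/-- `L` is an odd lattice: some vector has odd (integer) norm. -/
def IsOddLat (B : V →ₗ[ℚ] V →ₗ[ℚ] ℚ) (L : Submodule ℤ V) : Prop :=
  ∃ v ∈ L, ∃ n : ℤ, B v v = 2 * n + 1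

/-- An odd Niemeier lattice: an odd positive-definite unimodular integral lattice of rank 24
(positive-definiteness of `B` is a separate hypothesis). -/
def IsOddNiemeier (B : V →ₗ[ℚ] V →ₗ[ℚ] ℚ) (N : Submodule ℤ V) : Prop :=
  IsIntegralLattice B N ∧ IsUnimodular B N ∧ IsOddLat B N ∧ Module.finrank ℚ V = 24

/-- `D` is a subgroup of index two in `L`. -/
def IndexTwo (D L : Submodule ℤ V) : Prop :=
  D ≤ L ∧ ∃ a ∈ L, a ∉ D ∧ ∀ x ∈ L, x ∈ D ∨ x - a ∈ D

/-- Two lattices are neighbors if their intersection has index two in each of them. -/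
def Neighbors (L M : Submodule ℤ V) : Prop :=
  IndexTwo (L ⊓ M) L ∧ IndexTwo (L ⊓ M) M

/-- `E` is an even neighbor of the odd Niemeier lattice `N`: an even unimodular integral
lattice (in the same ambient space) which is a neighbor of `N`. -/
def IsEvenNeighbor (B : V →ₗ[ℚ] V →ₗ[ℚ] ℚ) (N E : Submodule ℤ V) : Prop :=
  IsIntegralLattice B E ∧ IsUnimodular B E ∧ IsEvenLat B E ∧ Neighbors N E

/-- The minimum norm of `L` equals `m`. -/
def HasMinNorm (B : V →ₗ[ℚ] V →ₗ[ℚ] ℚ) (L : Submodule ℤ V) (m : ℚ) : Prop :=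
  (∃ v ∈ L, v ≠ 0 ∧ B v v = m) ∧ ∀ v ∈ L, v ≠ 0 → m ≤ B v v

/-- `N` contains a sublattice isometric to the rank-6 lattice `L⁺`, i.e. there are vectors
`h, a 0, …, a 4` in `N` realizing the Gram matrix of `L⁺`. -/
def ContainsLPlus (B : V →ₗ[ℚ] V →ₗ[ℚ] ℚ) (N : Submodule ℤ V) : Prop :=
  ∃ h ∈ N, ∃ a : Fin 5 → V, (∀ i, a i ∈ N) ∧
    B h h = 2 ∧ (∀ i, B h (a i) = 1) ∧ (∀ i, B (a i) (a i) = 3) ∧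
    ∀ i j, i ≠ j → B (a i) (a j) = 0

/-- Two lattices (in possibly different ambient spaces, with forms `B` and `C`) are isometric:
there is a `ℤ`-linear bijection between them preserving the bilinear forms. -/
def LatticeIsometric (B : V → V → ℚ) (C : W → W → ℚ)
    (L : Submodule ℤ V) (M : Submodule ℤ W) : Prop :=
  ∃ f : L ≃ₗ[ℤ] M, ∀ x y : L, C (f x) (f y) = B x y

/-- The standard dot product on `ℚⁿ`. -/
def stdDot (n : ℕ) : (Fin n → ℚ) → (Fin n → ℚ) → ℚ := fun x y => ∑ i, x i * y i

/-- The orthogonal sum of two bilinear forms. -/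
def prodForm (B : V → V → ℚ) (C : W → W → ℚ) : V × W → V × W → ℚ :=
  fun p q => B p.1 q.1 + C p.2 q.2

/-- A vector in `ℚⁿ` has integer coordinates. -/
def IsIntVec {n : ℕ} (x : Fin n → ℚ) : Prop := ∀ i, ∃ m : ℤ, x i = m

/-- The root lattice `Dₙ = {x ∈ ℤⁿ : ∑ xᵢ even}`. -/
def latD (n : ℕ) : Submodule ℤ (Fin n → ℚ) where
  carrier := {x | IsIntVec x ∧ ∃ k : ℤ, ∑ i, x i = 2 * k}
  zero_mem' := by
    refine ⟨fun i => ⟨0, by simp⟩, 0, by simp⟩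
  add_mem' := by
    rintro a b ⟨ha, k₁, hk₁⟩ ⟨hb, k₂, hk₂⟩
    refine ⟨fun i => ?_, k₁ + k₂, ?_⟩
    · obtain ⟨m, hm⟩ := ha i
      obtain ⟨m', hm'⟩ := hb i
      exact ⟨m + m', by simp [Pi.add_apply, hm, hm']⟩
    · simp only [Pi.add_apply, Finset.sum_add_distrib, hk₁, hk₂]
      push_cast
      ring
  smul_mem' := by
    rintro c x ⟨hx, k, hk⟩
    refine ⟨fun i => ?_, c * k, ?_⟩
    · obtain ⟨m, hm⟩ := hx i
      exact ⟨c * m, by simp [Pi.smul_apply, hm, zsmul_eq_mul]⟩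
    · have : ∑ i, (c • x) i = c • ∑ i, x i := by
        simp [Pi.smul_apply, Finset.smul_sum]
      rw [this, hk, zsmul_eq_mul]
      push_cast
      ring

/-- The root lattice `Aₙ = {x ∈ ℤⁿ⁺¹ : ∑ xᵢ = 0}`. -/
def latA (n : ℕ) : Submodule ℤ (Fin (n + 1) → ℚ) where
  carrier := {x | IsIntVec x ∧ ∑ i, x i = 0}
  zero_mem' := ⟨fun i => ⟨0, by simp⟩, by simp⟩
  add_mem' := by
    rintro a b ⟨ha, hka⟩ ⟨hb, hkb⟩
    refine ⟨fun i => ?_, ?_⟩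
    · obtain ⟨m, hm⟩ := ha i
      obtain ⟨m', hm'⟩ := hb i
      exact ⟨m + m', by simp [Pi.add_apply, hm, hm']⟩
    · simp [Pi.add_apply, Finset.sum_add_distrib, hka, hkb]
  smul_mem' := by
    rintro c x ⟨hx, hk⟩
    refine ⟨fun i => ?_, ?_⟩
    · obtain ⟨m, hm⟩ := hx i
      exact ⟨c * m, by simp [Pi.smul_apply, hm, zsmul_eq_mul]⟩
    · have : ∑ i, (c • x) i = c • ∑ i, x i := by
        simp [Pi.smul_apply, Finset.smul_sum]
      rw [this, hk, smul_zero]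

/-- The root lattice `E₈ = D₈ + ℤ·(½,…,½)`. -/
def latE8 : Submodule ℤ (Fin 8 → ℚ) :=
  latD 8 ⊔ Submodule.span ℤ {fun _ => (1 : ℚ) / 2}

/-- The root sublattice of `E`: the `ℤ`-span of its vectors of norm 2. -/
def rootSublattice (B : V →ₗ[ℚ] V →ₗ[ℚ] ℚ) (E : Submodule ℤ V) : Submodule ℤ V :=
  Submodule.span ℤ {v : V | v ∈ E ∧ B v v = 2}

/-- The set of even-norm vectors of `N` (the even sublattice, as a set). -/
def evenSet (B : V →ₗ[ℚ] V →ₗ[ℚ] ℚ) (N : Submodule ℤ V) : Set V :=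
  {x | x ∈ N ∧ ∃ n : ℤ, B x x = 2 * n}

/-- The unordered pair of root sublattices of `E₁` and `E₂` is isometric to the pair
`(M₁, M₂)`. -/
def RootPairIso {W₁ W₂ : Type*} [AddCommGroup W₁] [Module ℚ W₁]
    [AddCommGroup W₂] [Module ℚ W₂]
    (B : V →ₗ[ℚ] V →ₗ[ℚ] ℚ) (E₁ E₂ : Submodule ℤ V)
    (C₁ : W₁ → W₁ → ℚ) (M₁ : Submodule ℤ W₁)
    (C₂ : W₂ → W₂ → ℚ) (M₂ : Submodule ℤ W₂) : Prop :=
  (LatticeIsometric (fun x y => B x y) C₁ (rootSublattice B E₁) M₁ ∧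
    LatticeIsometric (fun x y => B x y) C₂ (rootSublattice B E₂) M₂) ∨
  (LatticeIsometric (fun x y => B x y) C₂ (rootSublattice B E₁) M₂ ∧
    LatticeIsometric (fun x y => B x y) C₁ (rootSublattice B E₂) M₁)

/-- The unordered pair of root sublattices of `E₁`, `E₂` is one of the four exceptional pairs
`{E₈³, D₈³}`, `{D₁₆⊕E₈, A₁₅⊕D₉}`, `{D₁₂², A₁₂²}`, `{D₂₄, A₂₄}`. -/
def IsExceptionalPair (B : V →ₗ[ℚ] V →ₗ[ℚ] ℚ) (E₁ E₂ : Submodule ℤ V) : Prop :=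
  RootPairIso B E₁ E₂
    (prodForm (stdDot 8) (prodForm (stdDot 8) (stdDot 8))) (latE8.prod (latE8.prod latE8))
    (prodForm (stdDot 8) (prodForm (stdDot 8) (stdDot 8))) ((latD 8).prod ((latD 8).prod (latD 8))) ∨
  RootPairIso B E₁ E₂
    (prodForm (stdDot 16) (stdDot 8)) ((latD 16).prod latE8)
    (prodForm (stdDot 16) (stdDot 9)) ((latA 15).prod (latD 9)) ∨
  RootPairIso B E₁ E₂
    (prodForm (stdDot 12) (stdDot 12)) ((latD 12).prod (latD 12))
    (prodForm (stdDot 13) (stdDot 13)) ((latA 12).prod (latA 12)) ∨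
  RootPairIso B E₁ E₂
    (stdDot 24) (latD 24)
    (stdDot 25) (latA 24)


/-!
The even vectors of `N` form `N ∩ E₁ = N ∩ E₂`, so the roots of `N` are the roots of `E₂ ≅ A₂₄`
(the `e_p - e_q`, `p, q < 25`) and of `E₁ ≅ D₂₄` (the `±e_p ± e_q`, `p, q < 24`) lying in `N`.
As `N ∩ E₂` has index two in `E₂`, the roots of `E₂` in `N` are the `e_p - e_q` with `p, q` in
the same class of a partition of the `25` coordinates; counting the roots of `N` in both ways
shows that one class is a single coordinate `i₀`, so that `h = e_k - e_l` with `k, l ≠ i₀`.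

Extend the isometry to `V ≅ {x ∈ ℚ²⁵ | ∑ x = 0}` and let `x` be the image of some `aᵢ`. Pairing
with roots, `x_p - x_q` is an integer for `p, q ≠ i₀`, and `x_p - x_{i₀}` is a half-integer but not
an integer (otherwise `aᵢ`, of odd norm, would lie in the unimodular lattice `E₂`). Then `10 x` is
integral, of norm `300`, with entries off `i₀` congruent mod `10` and the entry at `i₀` off by `5`;
up to sign this leaves entries `1, -9` off `i₀` and `6` or `-14` at `i₀`, with `-9` at `l`
(resp. `k`) because `x_k - x_l = 1`. Two of the five vectors then have the same sign and the same
entry at `i₀`, and two such vectors are never orthogonal.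
-/

open Finset Matrix

section Neighbors

variable {B : V →ₗ[ℚ] V →ₗ[ℚ] ℚ} {N E : Submodule ℤ V}

theorem IndexTwo.sub_mem_iff {G : Type*} [AddCommGroup G] {D L : Submodule ℤ G}
    (h : IndexTwo D L) {x y : G} (hx : x ∈ L) (hy : y ∈ L) :
    x - y ∈ D ↔ (x ∈ D ↔ y ∈ D) := by
  obtain ⟨-, a, -, -, hco⟩ := h
  refine ⟨fun hxy => ⟨fun hxD => by simpa using D.sub_mem hxD hxy,
    fun hyD => by simpa using D.add_mem hxy hyD⟩, fun hiff => ?_⟩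
  by_cases hxD : x ∈ D
  · exact D.sub_mem hxD (hiff.1 hxD)
  · have hyD : y ∉ D := fun hyD => hxD (hiff.2 hyD)
    simpa using D.sub_mem ((hco x hx).resolve_left hxD) ((hco y hy).resolve_left hyD)

theorem IsEvenNeighbor.sub_mem_iff (hE : IsEvenNeighbor B N E) {x y : V} (hx : x ∈ E)
    (hy : y ∈ E) : x - y ∈ N ↔ (x ∈ N ↔ y ∈ N) := by
  simpa [Submodule.mem_inf, hx, hy, E.sub_mem hx hy] using hE.2.2.2.2.sub_mem_iff hx hy

theorem IsEvenNeighbor.add_mem_iff (hE : IsEvenNeighbor B N E) {x y : V} (hx : x ∈ E)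
    (hy : y ∈ E) : x + y ∈ N ↔ (x ∈ N ↔ y ∈ N) := by
  simpa using hE.sub_mem_iff hx (E.neg_mem hy)

theorem IsEvenNeighbor.exists_finset_iff {ι : Type*} [Fintype ι] (hE : IsEvenNeighbor B N E)
    (r : ι → ι → V) (hrE : ∀ p q, r p q ∈ E) (hr : ∀ p q s, r p s - r q s = r p q) :
    ∃ S : Finset ι, ∀ p q, r p q ∈ N ↔ (p ∈ S ↔ q ∈ S) := by
  classical
  rcases isEmpty_or_nonempty ι with hι | ⟨⟨i⟩⟩
  · exact ⟨∅, fun p => isEmptyElim p⟩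
  · refine ⟨({p | r p i ∈ N} : Finset ι), fun p q => ?_⟩
    simpa [← hr p q i] using hE.sub_mem_iff (hrE p i) (hrE q i)

theorem IsEvenNeighbor.add_self_mem (hE : IsEvenNeighbor B N E) {x : V} (hx : x ∈ E) :
    x + x ∈ N := by
  simpa using (hE.sub_mem_iff hx (E.neg_mem hx)).2 (neg_mem_iff (x := x)).symm

theorem IsEvenLat.notMem_of_odd (hE : IsEvenLat B E) {v : V}
    (hv : ∃ n : ℤ, B v v = 2 * n + 1) : v ∉ E := by
  intro hvE
  obtain ⟨k, hk⟩ := hE v hvE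
  obtain ⟨n, hn⟩ := hv
  have : (2 * n + 1 : ℤ) = 2 * k := by exact_mod_cast hn.symm.trans hk
  omega

/-- An even vector of `N` outside `E` would differ from an odd vector of `N` (also outside `E`)
by an element of `N ∩ E`, of odd norm. -/
theorem mem_of_isEvenNeighbor (hBs : ∀ x y, B x y = B y x) (hN : IsIntegralLattice B N)
    (hodd : IsOddLat B N) (hE : IsEvenNeighbor B N E) {v : V} (hv : v ∈ N)
    (heven : ∃ n : ℤ, B v v = 2 * n) : v ∈ E := by
  obtain ⟨w, hw, m, hm⟩ := hodd
  have hwE : w ∉ E := hE.2.2.1.notMem_of_odd ⟨m, hm⟩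
  by_contra hvE
  have hvw : v - w ∈ N ⊓ E :=
    (hE.2.2.2.1.sub_mem_iff hv hw).2 (iff_of_false (fun h => hvE h.2) (fun h => hwE h.2))
  obtain ⟨k, hk⟩ := hE.2.2.1 _ hvw.2
  obtain ⟨n, hn⟩ := heven
  obtain ⟨q, hq⟩ := hN.integral hv w hw
  have : (2 * k : ℚ) = 2 * n - 2 * q + (2 * m + 1) := by
    rw [← hk, ← hn, ← hq, ← hm]
    simp only [map_sub, LinearMap.sub_apply, hBs w v]
    ring
  have : 2 * k = 2 * n - 2 * q + (2 * m + 1) := by exact_mod_cast this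
  omega

theorem mem_of_exists_int_apply (hN : IsIntegralLattice B N) (hE : IsEvenNeighbor B N E)
    {a r : V} (ha : a ∈ N) (hr : r ∈ E) (hrN : r ∉ N) (hint : ∃ m : ℤ, B a r = m) : a ∈ E := by
  rw [hE.2.1]
  intro e he
  by_cases heN : e ∈ N
  · exact hN.integral ha e heN
  · obtain ⟨m, hm⟩ := hint
    obtain ⟨m', hm'⟩ := hN.integral ha _ ((hE.sub_mem_iff he hr).2 (iff_of_false heN hrN))
    refine ⟨m' + m, ?_⟩
    rw [map_sub, sub_eq_iff_eq_add] at hm'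
    push_cast
    rw [hm', hm]

end Neighbors

section Coordinates

variable {n : ℕ}

theorem IsIntVec.add {x y : Fin n → ℚ} (hx : IsIntVec x) (hy : IsIntVec y) : IsIntVec (x + y) :=
  fun i => by
    obtain ⟨a, ha⟩ := hx i
    obtain ⟨b, hb⟩ := hy i
    exact ⟨a + b, by simp [ha, hb]⟩

theorem IsIntVec.neg {x : Fin n → ℚ} (hx : IsIntVec x) : IsIntVec (-x) :=
  fun i => by
    obtain ⟨a, ha⟩ := hx i
    exact ⟨-a, by simp [ha]⟩

theorem IsIntVec.sub {x y : Fin n → ℚ} (hx : IsIntVec x) (hy : IsIntVec y) : IsIntVec (x - y) :=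
  sub_eq_add_neg x y ▸ hx.add hy.neg

theorem isIntVec_single (p : Fin n) : IsIntVec (Pi.single p (1 : ℚ)) := by
  intro i
  by_cases h : i = p
  · exact ⟨1, by simp [h]⟩
  · exact ⟨0, by simp [h]⟩

def aRoot (p q : Fin (n + 1)) : latA n :=
  ⟨Pi.single p 1 - Pi.single q 1, (isIntVec_single p).sub (isIntVec_single q),
    by simp [Finset.sum_sub_distrib]⟩

def dDiff (p q : Fin n) : latD n :=
  ⟨Pi.single p 1 - Pi.single q 1, (isIntVec_single p).sub (isIntVec_single q), 0,
    by simp [Finset.sum_sub_distrib]⟩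

def dSum (p q : Fin n) : latD n :=
  ⟨Pi.single p 1 + Pi.single q 1, (isIntVec_single p).add (isIntVec_single q), 1,
    by simp [Finset.sum_add_distrib]; norm_num⟩

/-- As `(p, q)` runs over ordered pairs with `p ≠ q`, this runs once over the roots
`±(e_p + e_q)` of `Dₙ`. -/
def dSigned (p q : Fin n) : latD n := if p < q then dSum p q else -dSum p q

theorem aRoot_sub (p q r : Fin (n + 1)) : aRoot p r - aRoot q r = aRoot p q :=
  Subtype.ext (by simp [aRoot])

theorem dDiff_sub (p q r : Fin n) : dDiff p r - dDiff q r = dDiff p q :=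
  Subtype.ext (by simp [dDiff])

theorem dDiff_self (p : Fin n) : dDiff p p = 0 :=
  Subtype.ext (by simp [dDiff])

theorem dSum_eq_dDiff_add (p q : Fin n) : dSum p q = dDiff p q + dSum q q :=
  Subtype.ext (by simp [dSum, dDiff])

theorem dSum_sub_dSum (p q : Fin n) : dSum p p - dSum q q = dDiff p q + dDiff p q :=
  Subtype.ext (by simp [dSum, dDiff]; abel)

theorem single_sub_single_injOn {m : ℕ} {p q p' q' : Fin m} (hpq : p ≠ q)
    (h : (Pi.single p 1 - Pi.single q 1 : Fin m → ℚ) = Pi.single p' 1 - Pi.single q' 1) :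
    p = p' ∧ q = q' := by
  have hp := congrFun h p
  have hq := congrFun h q
  simp only [Pi.sub_apply, Pi.single_apply, if_neg hpq.symm, if_neg hpq] at hp hq
  split_ifs at hp hq <;> first | (norm_num at hp; done) | (norm_num at hq; done) |
    (simp only [Fin.ext_iff] at *; omega)

theorem aRoot_injOn {p q p' q' : Fin (n + 1)} (hpq : p ≠ q)
    (h : aRoot p q = aRoot p' q') : p = p' ∧ q = q' :=
  single_sub_single_injOn hpq (congrArg Subtype.val h)

theorem dDiff_injOn {p q p' q' : Fin n} (hpq : p ≠ q)
    (h : dDiff p q = dDiff p' q') : p = p' ∧ q = q' :=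
  single_sub_single_injOn hpq (congrArg Subtype.val h)

theorem dSigned_apply {p q : Fin n} (hpq : p ≠ q) (j : Fin n) :
    (dSigned p q : Fin n → ℚ) j = if j = p ∨ j = q then (if p < q then 1 else -1) else 0 := by
  unfold dSigned
  by_cases hjp : j = p
  · subst hjp; split_ifs <;> simp_all [dSum]
  · by_cases hjq : j = q
    · subst hjq; split_ifs <;> simp_all [dSum]
    · split_ifs <;> simp_all [dSum]

theorem dSigned_injOn {p q p' q' : Fin n} (hpq : p ≠ q) (hpq' : p' ≠ q')
    (h : dSigned p q = dSigned p' q') : p = p' ∧ q = q' := by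
  have hp := congrArg (fun x : latD n => x.1 p) h
  have hq := congrArg (fun x : latD n => x.1 q) h
  simp only [dSigned_apply hpq, dSigned_apply hpq', true_or, or_true, if_true] at hp hq
  split_ifs at hp hq <;> first | (norm_num at hp; done) | (norm_num at hq; done) |
    (simp only [Fin.ext_iff, Fin.lt_def, ne_eq] at *; omega)

theorem dDiff_ne_dSigned {p q p' q' : Fin n} (hpq : p ≠ q) (hpq' : p' ≠ q') :
    dDiff p q ≠ dSigned p' q' := by
  intro h
  have hp := congrArg (fun x : latD n => x.1 p) h
  have hq := congrArg (fun x : latD n => x.1 q) h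
  simp only [dSigned_apply hpq', dDiff, Pi.sub_apply, Pi.single_apply, if_neg hpq.symm,
    if_neg hpq] at hp hq
  split_ifs at hp hq <;> first | (norm_num at hp; done) | norm_num at hq

theorem dotProduct_self_aRoot {p q : Fin (n + 1)} (hpq : p ≠ q) :
    (aRoot p q : Fin (n + 1) → ℚ) ⬝ᵥ aRoot p q = 2 := by
  simp [aRoot, dotProduct_sub, hpq, hpq.symm]
  norm_num

theorem dotProduct_self_dDiff {p q : Fin n} (hpq : p ≠ q) :
    (dDiff p q : Fin n → ℚ) ⬝ᵥ dDiff p q = 2 := by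
  simp [dDiff, dotProduct_sub, hpq, hpq.symm]
  norm_num

theorem dotProduct_self_dSigned {p q : Fin n} (hpq : p ≠ q) :
    (dSigned p q : Fin n → ℚ) ⬝ᵥ dSigned p q = 2 := by
  unfold dSigned
  split_ifs <;> simp [dSum, dotProduct_add, hpq, hpq.symm] <;> norm_num

end Coordinates

section NormTwo

variable {n : ℕ}

theorem exists_eq_single_add_single {x : Fin n → ℚ} (hx : IsIntVec x) (h2 : x ⬝ᵥ x = 2) :
    ∃ p q, p ≠ q ∧ (x p = 1 ∨ x p = -1) ∧ (x q = 1 ∨ x q = -1) ∧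
      x = Pi.single p (x p) + Pi.single q (x q) := by
  classical
  have hunit : ∀ i, x i ≠ 0 → x i = 1 ∨ x i = -1 := by
    intro i hi
    obtain ⟨m, hm⟩ := hx i
    have hle : x i * x i ≤ 2 :=
      h2 ▸ single_le_sum (fun j _ => mul_self_nonneg (x j)) (mem_univ i)
    rw [hm] at hi hle ⊢
    have hle' : m * m ≤ 2 := by exact_mod_cast hle
    have hm0 : m ≠ 0 := by exact_mod_cast hi
    have : m = 1 ∨ m = -1 := by
      have : -1 ≤ m ∧ m ≤ 1 := ⟨by nlinarith, by nlinarith⟩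
      omega
    rcases this with rfl | rfl <;> norm_num
  set P := univ.filter (fun i => x i ≠ 0) with hP
  have hmemP : ∀ i, i ∈ P ↔ x i ≠ 0 := by simp [hP]
  have hcard : #P = 2 := by
    have hsum : ∑ i ∈ P, x i * x i = 2 := by
      rw [sum_filter_of_ne fun i _ h => left_ne_zero_of_mul h]
      exact h2
    have hone : ∀ i ∈ P, x i * x i = 1 := fun i hi => by
      rcases hunit i ((hmemP i).1 hi) with h | h <;> simp [h]
    rw [sum_congr rfl hone] at hsum
    exact_mod_cast (by simpa using hsum : (#P : ℚ) = 2)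
  obtain ⟨p, q, hpq, hPpq⟩ := card_eq_two.1 hcard
  have hzero : ∀ j, j ≠ p → j ≠ q → x j = 0 := fun j hjp hjq => by
    by_contra h
    have := (hmemP j).2 h
    simp [hPpq, hjp, hjq] at this
  refine ⟨p, q, hpq, hunit p ((hmemP p).1 (by simp [hPpq])),
    hunit q ((hmemP q).1 (by simp [hPpq])), funext fun j => ?_⟩
  by_cases hjp : j = p
  · subst hjp; simp [hpq]
  · by_cases hjq : j = q
    · subst hjq; simp [hjp]
    · simp [hjp, hjq, hzero j hjp hjq]

theorem exists_eq_aRoot (x : latA n) (h2 : (x : Fin (n + 1) → ℚ) ⬝ᵥ x = 2) :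
    ∃ p q, p ≠ q ∧ x = aRoot p q := by
  obtain ⟨p, q, hpq, hp, hq, hx⟩ := exists_eq_single_add_single x.2.1 h2
  have hsum : x.1 p + x.1 q = 0 := by
    have := x.2.2
    rw [hx] at this
    simpa [sum_add_distrib] using this
  rcases hp with hp | hp
  · refine ⟨p, q, hpq, Subtype.ext ?_⟩
    rw [hx, hp, show x.1 q = -1 by linarith]
    simp [aRoot, sub_eq_add_neg, Pi.single_neg]
  · refine ⟨q, p, hpq.symm, Subtype.ext ?_⟩
    rw [hx, hp, show x.1 q = 1 by linarith]
    simp [aRoot, sub_eq_add_neg, Pi.single_neg, add_comm]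

theorem exists_eq_dDiff_or_dSigned (x : latD n) (h2 : (x : Fin n → ℚ) ⬝ᵥ x = 2) :
    ∃ p q, p ≠ q ∧ (x = dDiff p q ∨ x = dSigned p q) := by
  obtain ⟨p, q, hpq, hp, hq, hx⟩ := exists_eq_single_add_single x.2.1 h2
  rcases hp with hp | hp <;> rcases hq with hq | hq <;> rcases lt_or_gt_of_ne hpq with hlt | hlt <;>
    first
    | (refine ⟨p, q, hpq, Or.inl (Subtype.ext ?_)⟩
       simp [dDiff, hx, hp, hq, sub_eq_add_neg, Pi.single_neg]; done)
    | (refine ⟨q, p, hpq.symm, Or.inl (Subtype.ext ?_)⟩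
       simp [dDiff, hx, hp, hq, sub_eq_add_neg, Pi.single_neg, add_comm]; done)
    | (refine ⟨p, q, hpq, Or.inr (Subtype.ext ?_)⟩
       simp [dSigned, dSum, hx, hp, hq, hlt, hlt.not_gt, Pi.single_neg, add_comm]; done)
    | (refine ⟨q, p, hpq.symm, Or.inr (Subtype.ext ?_)⟩
       simp [dSigned, dSum, hx, hp, hq, hlt, hlt.not_gt, Pi.single_neg, add_comm])

end NormTwo

section Counting

variable {ι : Type*} [Fintype ι] [DecidableEq ι]

theorem card_filter_offDiag_add (R : ι × ι → Prop) [DecidablePred R] :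
    #{pq ∈ (univ : Finset ι).offDiag | R pq} + #{p | R (p, p)} = #{pq : ι × ι | R pq} := by
  rw [← univ_product_univ, ← diag_union_offDiag, filter_union,
    card_union_of_disjoint (disjoint_filter_filter (disjoint_diag_offDiag _)), add_comm]
  congr 1
  simp only [Finset.diag, filter_map, card_map]
  congr 1

theorem card_filter_mem_iff_mem (S : Finset ι) :
    #{pq : ι × ι | (pq.1 ∈ S ↔ pq.2 ∈ S)} = #S ^ 2 + #Sᶜ ^ 2 := by
  have : ({pq : ι × ι | (pq.1 ∈ S ↔ pq.2 ∈ S)} : Finset (ι × ι)) = S ×ˢ S ∪ Sᶜ ×ˢ Sᶜ := by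
    ext ⟨p, q⟩
    by_cases hp : p ∈ S <;> by_cases hq : q ∈ S <;> simp [hp, hq]
  rw [this, card_union_of_disjoint, card_product, card_product, sq, sq]
  exact disjoint_product.2 (Or.inl disjoint_compl_right)

theorem sq_add_sq_eq_577 : ∀ a ≤ 25, a ^ 2 + (25 - a) ^ 2 = 577 → a = 1 ∨ a = 24 := by
  decide

theorem sq_add_sq_add_23_ne : ∀ a ≤ 25, ∀ b ≤ 24,
    a ^ 2 + (25 - a) ^ 2 + 23 ≠ 2 * (b ^ 2 + (24 - b) ^ 2) := by
  decide

theorem exists_iff_eq_of_card_eq_one {ι : Type*} [Fintype ι] [DecidableEq ι] {S : Finset ι}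
    (hS : #S = 1 ∨ #Sᶜ = 1) : ∃ i₀, ∀ p q, (p ∈ S ↔ q ∈ S) ↔ (p = i₀ ↔ q = i₀) := by
  rcases hS with hS | hS <;> obtain ⟨i₀, hi₀⟩ := card_eq_one.1 hS
  · exact ⟨i₀, by simp [hi₀]⟩
  · refine ⟨i₀, fun p q => ?_⟩
    have h := fun x => Finset.ext_iff.1 hi₀ x
    simp only [mem_compl, mem_singleton] at h
    rw [← h p, ← h q, not_iff_not]

end Counting

section RootCount

variable {n : ℕ}

theorem ncard_aRoots (P : latA n → Prop) [DecidablePred P] :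
    {x : latA n | (x : Fin (n + 1) → ℚ) ⬝ᵥ x = 2 ∧ P x}.ncard =
      #{pq ∈ (univ : Finset (Fin (n + 1))).offDiag | P (aRoot pq.1 pq.2)} := by
  have : {x : latA n | (x : Fin (n + 1) → ℚ) ⬝ᵥ x = 2 ∧ P x} =
      (fun pq : Fin (n + 1) × Fin (n + 1) => aRoot pq.1 pq.2) ''
        ↑({pq ∈ univ.offDiag | P (aRoot pq.1 pq.2)} : Finset (Fin (n + 1) × Fin (n + 1))) := by
    ext x
    simp only [Set.mem_ofPred_eq, Set.mem_image, coe_filter, mem_offDiag, mem_univ, true_and,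
      Prod.exists]
    constructor
    · rintro ⟨h2, hP⟩
      obtain ⟨p, q, hpq, rfl⟩ := exists_eq_aRoot x h2
      exact ⟨p, q, ⟨hpq, hP⟩, rfl⟩
    · rintro ⟨p, q, ⟨hpq, hP⟩, rfl⟩
      exact ⟨dotProduct_self_aRoot hpq, hP⟩
  rw [this, Set.InjOn.ncard_image, Set.ncard_coe_finset]
  rintro ⟨p, q⟩ hpq ⟨p', q'⟩ - h
  obtain ⟨rfl, rfl⟩ := aRoot_injOn (by simp_all) h
  rfl

theorem ncard_dRoots (P : latD n → Prop) [DecidablePred P] (hP : ∀ x, P (-x) ↔ P x) :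
    {x : latD n | (x : Fin n → ℚ) ⬝ᵥ x = 2 ∧ P x}.ncard =
      #{pq ∈ (univ : Finset (Fin n)).offDiag | P (dDiff pq.1 pq.2)} +
        #{pq ∈ (univ : Finset (Fin n)).offDiag | P (dSum pq.1 pq.2)} := by
  set A : Finset (Fin n × Fin n) := {pq ∈ univ.offDiag | P (dDiff pq.1 pq.2)}
  set S : Finset (Fin n × Fin n) := {pq ∈ univ.offDiag | P (dSigned pq.1 pq.2)}
  have hS : S = {pq ∈ (univ : Finset (Fin n)).offDiag | P (dSum pq.1 pq.2)} := by
    refine filter_congr fun pq _ => ?_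
    unfold dSigned
    split_ifs <;> simp [hP]
  have : {x : latD n | (x : Fin n → ℚ) ⬝ᵥ x = 2 ∧ P x} =
      (fun pq : Fin n × Fin n => dDiff pq.1 pq.2) '' ↑A ∪
        (fun pq : Fin n × Fin n => dSigned pq.1 pq.2) '' ↑S := by
    ext x
    simp only [A, S, Set.mem_ofPred_eq, Set.mem_union, Set.mem_image, coe_filter, mem_offDiag,
      mem_univ, true_and, Prod.exists]
    constructor
    · rintro ⟨h2, hP⟩
      obtain ⟨p, q, hpq, rfl | rfl⟩ := exists_eq_dDiff_or_dSigned x h2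
      · exact Or.inl ⟨p, q, ⟨hpq, hP⟩, rfl⟩
      · exact Or.inr ⟨p, q, ⟨hpq, hP⟩, rfl⟩
    · rintro (⟨p, q, ⟨hpq, hP⟩, rfl⟩ | ⟨p, q, ⟨hpq, hP⟩, rfl⟩)
      · exact ⟨dotProduct_self_dDiff hpq, hP⟩
      · exact ⟨dotProduct_self_dSigned hpq, hP⟩
  rw [this, Set.ncard_union_eq, Set.InjOn.ncard_image, Set.InjOn.ncard_image,
    Set.ncard_coe_finset, Set.ncard_coe_finset, hS]
  · rintro ⟨p, q⟩ hpq ⟨p', q'⟩ hpq' h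
    obtain ⟨rfl, rfl⟩ := dSigned_injOn (by simp_all [S]) (by simp_all [S]) h
    rfl
  · rintro ⟨p, q⟩ hpq ⟨p', q'⟩ - h
    obtain ⟨rfl, rfl⟩ := dDiff_injOn (by simp_all [A]) h
    rfl
  · rw [Set.disjoint_left]
    rintro _ ⟨⟨p, q⟩, hpq, rfl⟩ ⟨⟨p', q'⟩, hpq', h⟩
    exact dDiff_ne_dSigned (by simp_all [A]) (by simp_all [S]) h.symm

end RootCount

section Pullback

variable {B : V →ₗ[ℚ] V →ₗ[ℚ] ℚ} {N E : Submodule ℤ V} {m : ℕ} {M : Submodule ℤ (Fin m → ℚ)}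

theorem rootSublattice_le : rootSublattice B E ≤ E :=
  Submodule.span_le.2 fun _ hv => hv.1

def pull (f : rootSublattice B E ≃ₗ[ℤ] M) : M →ₗ[ℤ] V :=
  (rootSublattice B E).subtype ∘ₗ f.symm.toLinearMap

theorem pull_mem (f : rootSublattice B E ≃ₗ[ℤ] M) (x : M) : pull f x ∈ E :=
  rootSublattice_le (f.symm x).2

theorem pull_injective (f : rootSublattice B E ≃ₗ[ℤ] M) : Function.Injective (pull f) :=
  Subtype.val_injective.comp f.symm.injective

theorem apply_pull_pull (f : rootSublattice B E ≃ₗ[ℤ] M)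
    (hf : ∀ x y, stdDot m (f x) (f y) = B x y) (x y : M) :
    B (pull f x) (pull f y) = (x : Fin m → ℚ) ⬝ᵥ y := by
  have := hf (f.symm x) (f.symm y)
  rw [LinearEquiv.apply_symm_apply, LinearEquiv.apply_symm_apply] at this
  exact this.symm

def roots (B : V →ₗ[ℚ] V →ₗ[ℚ] ℚ) (L : Submodule ℤ V) : Set V := {v | v ∈ L ∧ B v v = 2}

theorem roots_eq_image_pull (hBs : ∀ x y, B x y = B y x) (hN : IsIntegralLattice B N)
    (hodd : IsOddLat B N) (hE : IsEvenNeighbor B N E) (f : rootSublattice B E ≃ₗ[ℤ] M)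
    (hf : ∀ x y, stdDot m (f x) (f y) = B x y) :
    roots B N = pull f '' {x : M | (x : Fin m → ℚ) ⬝ᵥ x = 2 ∧ pull f x ∈ N} := by
  ext v
  constructor
  · rintro ⟨hvN, hv2⟩
    have hvR : v ∈ rootSublattice B E := Submodule.subset_span
      ⟨mem_of_isEvenNeighbor hBs hN hodd hE hvN ⟨1, by rw [hv2]; norm_num⟩, hv2⟩
    have hpull : pull f (f ⟨v, hvR⟩) = v := by simp [pull]
    refine ⟨f ⟨v, hvR⟩, ⟨?_, by rwa [hpull]⟩, hpull⟩
    rw [← apply_pull_pull f hf, hpull, hv2]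
  · rintro ⟨x, ⟨hx2, hxN⟩, rfl⟩
    exact ⟨hxN, (apply_pull_pull f hf x x).trans hx2⟩

end Pullback

section RootSystems

variable {B : V →ₗ[ℚ] V →ₗ[ℚ] ℚ} {N E E₁ E₂ : Submodule ℤ V} {n : ℕ}

theorem exists_finset_ncard_roots_of_latA (hBs : ∀ x y, B x y = B y x)
    (hN : IsIntegralLattice B N) (hodd : IsOddLat B N) (hE : IsEvenNeighbor B N E)
    (f : rootSublattice B E ≃ₗ[ℤ] latA n) (hf : ∀ x y, stdDot (n + 1) (f x) (f y) = B x y) :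
    ∃ S : Finset (Fin (n + 1)), (∀ p q, pull f (aRoot p q) ∈ N ↔ (p ∈ S ↔ q ∈ S)) ∧
      (roots B N).ncard + (n + 1) = #S ^ 2 + #Sᶜ ^ 2 := by
  classical
  obtain ⟨S, hS⟩ := hE.exists_finset_iff (fun p q => pull f (aRoot p q))
    (fun _ _ => pull_mem f _) (fun p q s => by rw [← map_sub, aRoot_sub])
  refine ⟨S, hS, ?_⟩
  rw [roots_eq_image_pull hBs hN hodd hE f hf, Set.ncard_image_of_injective _ (pull_injective f),
    ncard_aRoots (fun x => pull f x ∈ N), ← card_filter_mem_iff_mem, ← card_filter_offDiag_add]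
  congr 1
  · exact congrArg card (filter_congr fun pq _ => hS _ _)
  · simp

/-- `2 e_p - 2 e_q = 2 (e_p - e_q) ∈ 2 E ⊆ N`, so whether `2 e_q` lies in `N` does not depend
on `q`, and `e_p + e_q = (e_p - e_q) + 2 e_q`. -/
theorem pull_dSum_mem_iff (hE : IsEvenNeighbor B N E) (f : rootSublattice B E ≃ₗ[ℤ] latD n)
    (p q : Fin n) : pull f (dSum p q) ∈ N ↔
      (pull f (dDiff p q) ∈ N ↔ ∀ r, pull f (dSum r r) ∈ N) := by
  have htwice (r : Fin n) : pull f (dSum q q) ∈ N ↔ pull f (dSum r r) ∈ N := by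
    refine (hE.sub_mem_iff (pull_mem f _) (pull_mem f _)).1 ?_
    rw [← map_sub, dSum_sub_dSum, map_add]
    exact hE.add_self_mem (pull_mem f _)
  rw [dSum_eq_dDiff_add, map_add, hE.add_mem_iff (pull_mem f _) (pull_mem f _)]
  exact iff_congr Iff.rfl ⟨fun h r => (htwice r).1 h, fun h => h q⟩

/-- Either every `2 e_p` lies in `N`, and the roots of `N` are those of `D_T ⊕ D_Tᶜ`, or none
does, and then `e_p + e_q ∈ N` exactly when `e_p - e_q ∉ N`. -/
theorem ncard_roots_of_latD (hBs : ∀ x y, B x y = B y x)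
    (hN : IsIntegralLattice B N) (hodd : IsOddLat B N) (hE : IsEvenNeighbor B N E)
    (f : rootSublattice B E ≃ₗ[ℤ] latD n) (hf : ∀ x y, stdDot n (f x) (f y) = B x y) :
    (∃ T : Finset (Fin n), (roots B N).ncard + 2 * n = 2 * (#T ^ 2 + #Tᶜ ^ 2)) ∨
      (roots B N).ncard + n = n * n := by
  classical
  obtain ⟨T, hT⟩ := hE.exists_finset_iff (fun p q => pull f (dDiff p q))
    (fun _ _ => pull_mem f _) (fun p q r => by rw [← map_sub, dDiff_sub])
  have hcount : (roots B N).ncard =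
      #{pq ∈ (univ : Finset (Fin n)).offDiag | pull f (dDiff pq.1 pq.2) ∈ N} +
        #{pq ∈ (univ : Finset (Fin n)).offDiag | pull f (dSum pq.1 pq.2) ∈ N} := by
    rw [roots_eq_image_pull hBs hN hodd hE f hf, Set.ncard_image_of_injective _ (pull_injective f)]
    exact ncard_dRoots (fun x => pull f x ∈ N) (fun x => by simp)
  have hdiff := card_filter_offDiag_add fun pq : Fin n × Fin n => pull f (dDiff pq.1 pq.2) ∈ N
  have hdiff' : #{pq : Fin n × Fin n | pull f (dDiff pq.1 pq.2) ∈ N} = #T ^ 2 + #Tᶜ ^ 2 := by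
    rw [← card_filter_mem_iff_mem]
    exact congrArg card (filter_congr fun pq _ => hT _ _)
  have hsums := card_filter_offDiag_add fun pq : Fin n × Fin n => pull f (dSum pq.1 pq.2) ∈ N
  by_cases hτ : ∀ r, pull f (dSum r r) ∈ N
  · refine Or.inl ⟨T, ?_⟩
    have hs (p q : Fin n) : pull f (dSum p q) ∈ N ↔ pull f (dDiff p q) ∈ N :=
      (pull_dSum_mem_iff hE f p q).trans (iff_true_right hτ)
    simp only [hs] at hcount hsums
    simp only [dDiff_self, map_zero, N.zero_mem, filter_true, card_univ, Fintype.card_fin]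
      at hdiff hsums
    omega
  · refine Or.inr ?_
    have hs (p q : Fin n) : pull f (dSum p q) ∈ N ↔ pull f (dDiff p q) ∉ N :=
      (pull_dSum_mem_iff hE f p q).trans (iff_false_right hτ)
    have hcompl := card_filter_add_card_filter_not
      (s := (univ : Finset (Fin n × Fin n))) fun pq => pull f (dDiff pq.1 pq.2) ∈ N
    simp only [hs] at hcount hsums
    simp only [card_univ, Fintype.card_prod, Fintype.card_fin] at hcompl
    simp only [dDiff_self, map_zero, N.zero_mem, not_true_eq_false, filter_true, filter_false,
      card_univ, card_empty, Fintype.card_fin] at hdiff hsums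
    omega

/-- Comparing the number of roots of `N` seen from `E₁` and from `E₂` forces the partition of the
`25` coordinates cut out by `N ∩ E₂` to isolate a single coordinate. -/
theorem exists_isolated_index (hBs : ∀ x y, B x y = B y x)
    (hN : IsIntegralLattice B N) (hodd : IsOddLat B N)
    (hE₁ : IsEvenNeighbor B N E₁) (hE₂ : IsEvenNeighbor B N E₂)
    (f₁ : rootSublattice B E₁ ≃ₗ[ℤ] latD 24) (hf₁ : ∀ x y, stdDot 24 (f₁ x) (f₁ y) = B x y)
    (f₂ : rootSublattice B E₂ ≃ₗ[ℤ] latA 24) (hf₂ : ∀ x y, stdDot 25 (f₂ x) (f₂ y) = B x y) :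
    ∃ i₀ : Fin 25, ∀ p q, pull f₂ (aRoot p q) ∈ N ↔ (p = i₀ ↔ q = i₀) := by
  classical
  obtain ⟨S, hS, hcountA⟩ := exists_finset_ncard_roots_of_latA hBs hN hodd hE₂ f₂ hf₂
  have hSc : #Sᶜ = 25 - #S := by simp [card_compl]
  rw [hSc] at hcountA
  have hSle : #S ≤ 25 := by simpa using card_le_univ S
  rcases ncard_roots_of_latD hBs hN hodd hE₁ f₁ hf₁ with ⟨T, hcountD⟩ | hcountD
  · rw [show #Tᶜ = 24 - #T by simp [card_compl]] at hcountD
    have hTle : #T ≤ 24 := by simpa using card_le_univ T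
    exact (sq_add_sq_add_23_ne _ hSle _ hTle (by linarith)).elim
  · have h577 : #S ^ 2 + (25 - #S) ^ 2 = 577 := by linarith
    obtain ⟨i₀, hi₀⟩ := exists_iff_eq_of_card_eq_one (S := S) (by
      rcases sq_add_sq_eq_577 _ hSle h577 with h | h
      · exact Or.inl h
      · exact Or.inr (by rw [hSc, h]))
    exact ⟨i₀, fun p q => (hS p q).trans (hi₀ p q)⟩

end RootSystems

section Isometry

variable {B : V →ₗ[ℚ] V →ₗ[ℚ] ℚ}

theorem linearIndependent_of_apply_eq_dotProduct {ι : Type*} [Fintype ι] {m : ℕ}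
    {u : ι → Fin m → ℚ} (hu : LinearIndependent ℚ u) {w : ι → V}
    (h : ∀ i j, B (w i) (w j) = u i ⬝ᵥ u j) : LinearIndependent ℚ w := by
  rw [Fintype.linearIndependent_iff] at hu ⊢
  intro g hg
  refine hu g (dotProduct_self_eq_zero.1 ?_)
  calc (∑ i, g i • u i) ⬝ᵥ (∑ i, g i • u i) = B (∑ i, g i • w i) (∑ i, g i • w i) := by
        simp [sum_dotProduct, dotProduct_sum, map_sum, h]
    _ = 0 := by simp [hg]

theorem exists_linearMap_isometry_of_latA {n : ℕ} {E : Submodule ℤ V}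
    (hrank : Module.finrank ℚ V = n + 1) (f : rootSublattice B E ≃ₗ[ℤ] latA (n + 1))
    (hf : ∀ x y, stdDot (n + 2) (f x) (f y) = B x y) :
    ∃ F : V →ₗ[ℚ] (Fin (n + 2) → ℚ), (∀ v w, F v ⬝ᵥ F w = B v w) ∧ (∀ v, ∑ p, F v p = 0) ∧
      ∀ v x, B v (pull f x) = F v ⬝ᵥ x := by
  let u : Fin (n + 1) → latA (n + 1) := fun i => aRoot i.castSucc (Fin.last _)
  have hu : LinearIndependent ℚ fun i => (u i : Fin (n + 2) → ℚ) := by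
    rw [Fintype.linearIndependent_iff]
    intro g hg i
    simpa [u, aRoot, Pi.single_apply, Fin.castSucc_ne_last, Fin.castSucc_inj] using
      congrFun hg i.castSucc
  let b := basisOfLinearIndependentOfCardEqFinrank
    (linearIndependent_of_apply_eq_dotProduct hu fun i j => apply_pull_pull f hf (u i) (u j))
    (by simp [hrank])
  have hb (i : Fin (n + 1)) : b i = pull f (u i) := by simp [b]
  let F := b.constr ℚ fun i => (u i : Fin (n + 2) → ℚ)
  have hF (i : Fin (n + 1)) : F (b i) = u i := b.constr_basis ℚ _ i
  refine ⟨F, fun v w => ?_, fun v => ?_, fun v x => ?_⟩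
  · have : (dotProductBilin ℚ ℚ).compl₁₂ F F = B := LinearMap.ext_basis b b fun i j => by
      change F (b i) ⬝ᵥ F (b j) = B (b i) (b j)
      rw [hF, hF, hb, hb, apply_pull_pull f hf]
    exact LinearMap.congr_fun₂ this v w
  · have : (dotProductBilin ℚ ℚ).flip 1 ∘ₗ F = 0 := b.ext fun i => by
      simp [hF, dotProduct_one, (u i).2.2]
    simpa [dotProduct_one] using LinearMap.congr_fun this v
  · have : B.flip (pull f x) = (dotProductBilin ℚ ℚ).flip x ∘ₗ F := b.ext fun i => by
      change B (b i) (pull f x) = F (b i) ⬝ᵥ x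
      rw [hF, hb, apply_pull_pull f hf]
    exact LinearMap.congr_fun this v

end Isometry

section Pairings

variable {B : V →ₗ[ℚ] V →ₗ[ℚ] ℚ} {N E : Submodule ℤ V} {n : ℕ}

theorem exists_pull_aRoot_eq (f : rootSublattice B E ≃ₗ[ℤ] latA n)
    (hf : ∀ x y, stdDot (n + 1) (f x) (f y) = B x y) {v : V} (hv : v ∈ E) (hv2 : B v v = 2) :
    ∃ p q, p ≠ q ∧ pull f (aRoot p q) = v := by
  have hvR : v ∈ rootSublattice B E := Submodule.subset_span ⟨hv, hv2⟩
  obtain ⟨p, q, hpq, hpqv⟩ := exists_eq_aRoot (f ⟨v, hvR⟩) ((hf _ _).trans hv2)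
  exact ⟨p, q, hpq, by simp [pull, ← hpqv]⟩

/-- `2 a` is even, hence lies in `E`; if `a` paired integrally with a root outside `N` it would
lie in the unimodular lattice `E` too, whose norms are even. -/
theorem int_apply_pull_aRoot (hBs : ∀ x y, B x y = B y x) (hN : IsIntegralLattice B N)
    (hodd : IsOddLat B N) (hE : IsEvenNeighbor B N E) (f : rootSublattice B E ≃ₗ[ℤ] latA n)
    {i₀ : Fin (n + 1)} (hi₀ : ∀ p q, pull f (aRoot p q) ∈ N ↔ (p = i₀ ↔ q = i₀))
    {a : V} (ha : a ∈ N) (ha_odd : ∃ m : ℤ, B a a = 2 * m + 1) :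
    (∀ p q, p ≠ i₀ → q ≠ i₀ → ∃ m : ℤ, B a (pull f (aRoot p q)) = m) ∧
      (∀ p q, ∃ m : ℤ, 2 * B a (pull f (aRoot p q)) = m) ∧
      ∀ p, p ≠ i₀ → ¬ ∃ m : ℤ, B a (pull f (aRoot p i₀)) = m := by
  refine ⟨fun p q hp hq => hN.integral ha _ ((hi₀ p q).2 (iff_of_false hp hq)),
    fun p q => ?_, fun p hp hint => ?_⟩
  · obtain ⟨m, hm⟩ := ha_odd
    have h2a : a + a ∈ E := mem_of_isEvenNeighbor hBs hN hodd hE (N.add_mem ha ha)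
      ⟨2 * (2 * m + 1), by simp only [map_add, LinearMap.add_apply, hm]; push_cast; ring⟩
    simpa [two_mul] using hE.1.integral h2a _ (pull_mem f (aRoot p q))
  · refine hE.2.2.1.notMem_of_odd ha_odd (mem_of_exists_int_apply hN hE ha (pull_mem f _) ?_ hint)
    simpa [hi₀] using hp

end Pairings

section Arithmetic

/-- Writing `g = g 0 + d` with `d` integral, `∑ g = 0` gives `25 g 0 = -∑ d`, and then
`g ⬝ᵥ g = ∑ d² - (∑ d)² / 25` forces `5 ∣ ∑ d`. -/
theorem isIntVec_five_smul {g : Fin 25 → ℚ} (hdiff : ∀ p q, ∃ m : ℤ, g p - g q = m)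
    (hsum : ∑ p, g p = 0) (hnorm : ∃ k : ℤ, g ⬝ᵥ g = k) : IsIntVec (5 • g) := by
  choose d hd using fun p => hdiff p 0
  obtain ⟨k, hk⟩ := hnorm
  set c := g 0
  have hg (p : Fin 25) : g p = c + d p := by linarith [hd p]
  have hD : ∑ p, (d p : ℚ) = -(25 * c) := by
    simp only [hg, sum_add_distrib, sum_const, card_univ, Fintype.card_fin, nsmul_eq_mul] at hsum
    push_cast at hsum
    linarith
  have hS : 25 * c ^ 2 + 2 * c * ∑ p, (d p : ℚ) + ∑ p, (d p : ℚ) ^ 2 = k := by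
    rw [← hk, dotProduct]
    simp only [hg, add_mul, mul_add, sum_add_distrib, ← sum_mul, ← mul_sum, sum_const,
      card_univ, Fintype.card_fin, nsmul_eq_mul]
    simp only [sq]
    ring
  have hsq : (∑ p, d p) ^ 2 = 5 * (5 * (∑ p, d p ^ 2 - k)) := by
    have : ((∑ p, d p : ℤ) : ℚ) ^ 2 = 5 * (5 * (∑ p, (d p : ℚ) ^ 2 - k)) := by
      push_cast
      rw [← hS, hD]
      ring
    exact_mod_cast this
  obtain ⟨e, he⟩ : (5 : ℤ) ∣ ∑ p, d p :=
    (by norm_num : Prime (5 : ℤ)).dvd_of_dvd_pow (Dvd.intro _ hsq.symm)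
  intro p
  refine ⟨5 * d p - e, ?_⟩
  have : (∑ p, (d p : ℚ)) = 5 * e := by exact_mod_cast he
  simp only [Pi.smul_apply, nsmul_eq_mul, hg p]
  push_cast
  linarith

theorem exists_intCast_eq_iff_dvd {D a : ℤ} {r : ℚ} (ha : a ≠ 0) (h : (D : ℚ) = a * r) :
    (∃ m : ℤ, r = m) ↔ a ∣ D := by
  constructor
  · rintro ⟨m, rfl⟩
    exact ⟨m, by exact_mod_cast h⟩
  · rintro ⟨m, rfl⟩
    refine ⟨m, mul_left_cancel₀ (Int.cast_ne_zero.2 ha) ?_⟩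
    rw [← h]
    push_cast
    ring

end Arithmetic

section IntegerVectors

theorem sum_erase_eq_sub {ι M : Type*} [Fintype ι] [DecidableEq ι] [AddCommGroup M]
    {f : ι → M} {c : M} (h : ∑ p, f p = c) (i₀ : ι) :
    ∑ p ∈ univ.erase i₀, f p = c - f i₀ := by
  rw [← h, ← add_sum_erase univ f (mem_univ i₀), add_sub_cancel_left]

theorem sum_eq_zero_or_le {ι : Type*} {s : Finset ι} {f : ι → ℤ} {b : ℤ} (hb : 0 ≤ b)
    (h : ∀ i ∈ s, f i = 0 ∨ b ≤ f i) : ∑ i ∈ s, f i = 0 ∨ b ≤ ∑ i ∈ s, f i := by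
  by_cases h0 : ∀ i ∈ s, f i = 0
  · exact Or.inl (sum_eq_zero h0)
  · push Not at h0
    obtain ⟨i, hi, hfi⟩ := h0
    refine Or.inr (((h i hi).resolve_left hfi).trans (single_le_sum (fun j hj => ?_) hi))
    rcases h j hj with h | h <;> omega

theorem mul_add_ten_eq_zero_or_le {y : ℤ} (hy : 10 ∣ y) :
    y * (y + 10) = 0 ∨ 200 ≤ y * (y + 10) := by
  obtain ⟨k, rfl⟩ := hy
  rcases le_or_gt k (-2) with hk | hk
  · right; nlinarith
  rcases le_or_gt 1 k with hk' | hk'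
  · right; nlinarith
  · left; interval_cases k <;> norm_num

theorem sum_erase_mul_add_ten_add_sq {Y : Fin 25 → ℤ} {i₀ : Fin 25} {c j : ℤ}
    (hsum : ∑ p, Y p = 0) (hnorm : ∑ p, Y p ^ 2 = 300) (hj : Y i₀ - c + 5 = 10 * j) :
    ∑ p ∈ univ.erase i₀, (Y p - c) * (Y p - c + 10) + (10 * j) ^ 2 = 25 * ((c - 5) ^ 2 - 12) := by
  have hT (p : Fin 25) :
      (Y p - c) * (Y p - c + 10) = Y p ^ 2 + (10 - 2 * c) * Y p + (c ^ 2 - 10 * c) := by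
    ring
  simp only [hT, sum_add_distrib, ← mul_sum, sum_const, card_erase_of_mem (mem_univ _),
    sum_erase_eq_sub hnorm, sum_erase_eq_sub hsum, card_univ, Fintype.card_fin]
  rw [show Y i₀ = 10 * j + c - 5 by omega]
  push_cast
  ring

/-- With `c ≡ Y p (mod 10)` off `i₀`, the terms `(Y p - c) (Y p - c + 10)` lie in `{0} ∪ [200, ∞)`
and sum to `25 ((c - 5)² - 12) - (Y i₀ - c + 5)²`; this forces `c ∈ {1, 9}` and all terms `0`. -/
theorem exists_sign_of_ten_dvd (Y : Fin 25 → ℤ) (i₀ : Fin 25)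
    (hcong : ∀ p q, p ≠ i₀ → q ≠ i₀ → 10 ∣ Y p - Y q)
    (hcross : ∀ p, p ≠ i₀ → 5 ∣ Y p - Y i₀ ∧ ¬ 10 ∣ Y p - Y i₀)
    (hsum : ∑ p, Y p = 0) (hnorm : ∑ p, Y p ^ 2 = 300) :
    ∃ ε : ℤ, (ε = 1 ∨ ε = -1) ∧ (∀ p, p ≠ i₀ → ε * Y p = 1 ∨ ε * Y p = -9) ∧
      (ε * Y i₀ = 6 ∨ ε * Y i₀ = -14) := by
  obtain ⟨p₀, hp₀⟩ := exists_ne i₀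
  obtain ⟨c, hc⟩ : ∃ c, c = Y p₀ % 10 := ⟨_, rfl⟩
  have hc0 : 0 ≤ c := hc ▸ Int.emod_nonneg _ (by norm_num)
  have hc10 : c < 10 := hc ▸ Int.emod_lt_of_pos _ (by norm_num)
  have hYc : ∀ p ∈ univ.erase i₀, 10 ∣ Y p - c := fun p hp => by
    have := hcong p p₀ (ne_of_mem_erase hp) hp₀
    omega
  obtain ⟨j, hj⟩ : 10 ∣ Y i₀ - c + 5 := by
    have := hcross p₀ hp₀
    omega
  have hodd : c % 2 = 1 := by
    have h := dvd_sum hYc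
    rw [sum_sub_distrib, sum_erase_eq_sub hsum, sum_const, card_erase_of_mem (mem_univ _)] at h
    norm_num at h
    omega
  have hT := fun p hp => mul_add_ten_eq_zero_or_le (hYc p hp)
  have hTnn : ∀ p ∈ univ.erase i₀, 0 ≤ (Y p - c) * (Y p - c + 10) := fun p hp => by
    rcases hT p hp with h | h <;> omega
  have hkey := sum_erase_mul_add_ten_add_sq hsum hnorm hj
  have hc19 : c = 1 ∨ c = 9 := by
    interval_cases c <;> first | omega | nlinarith [sq_nonneg j, sum_nonneg hTnn]
  have hT0 : ∑ p ∈ univ.erase i₀, (Y p - c) * (Y p - c + 10) = 0 := by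
    refine (sum_eq_zero_or_le (by norm_num) hT).resolve_right fun h => ?_
    rcases hc19 with rfl | rfl <;> nlinarith [sq_nonneg j]
  have hj1 : j = 1 ∨ j = -1 := by
    rw [hT0] at hkey
    have : (j - 1) * (j + 1) = 0 := by rcases hc19 with rfl | rfl <;> linarith
    rcases mul_eq_zero.1 this with h | h <;> omega
  have hYp (p : Fin 25) (hp : p ≠ i₀) : Y p = c ∨ Y p = c - 10 := by
    have := (sum_eq_zero_iff_of_nonneg hTnn).1 hT0 p (mem_erase.2 ⟨hp, mem_univ _⟩)
    rcases mul_eq_zero.1 this with h | h <;> omega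
  rcases hc19 with rfl | rfl
  · exact ⟨1, Or.inl rfl, fun p hp => by rcases hYp p hp with h | h <;> omega, by omega⟩
  · exact ⟨-1, Or.inr rfl, fun p hp => by rcases hYp p hp with h | h <;> omega, by omega⟩

/-- Off `i₀` each `(Z₁ p - 1) (Z₂ p - 1)` is `0` or `100`, and it is `100` at `s`; but these terms
sum to `25 - (Z₁ i₀ - 1)² ≤ 0`. -/
theorem false_of_orthogonal {Z₁ Z₂ : Fin 25 → ℤ} {i₀ s : Fin 25} (hs : s ≠ i₀)
    (h₁ : ∀ p, p ≠ i₀ → Z₁ p = 1 ∨ Z₁ p = -9) (h₂ : ∀ p, p ≠ i₀ → Z₂ p = 1 ∨ Z₂ p = -9)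
    (hs₁ : Z₁ s = -9) (hs₂ : Z₂ s = -9) (h₀ : Z₁ i₀ = Z₂ i₀) (h₀' : Z₁ i₀ = 6 ∨ Z₁ i₀ = -14)
    (hsum₁ : ∑ p, Z₁ p = 0) (hsum₂ : ∑ p, Z₂ p = 0) (horth : ∑ p, Z₁ p * Z₂ p = 0) : False := by
  set W : Fin 25 → ℤ := fun p => (Z₁ p - 1) * (Z₂ p - 1)
  have hW : ∀ p ∈ univ.erase i₀, 0 ≤ W p := fun p hp => by
    have hp := ne_of_mem_erase hp
    rcases h₁ p hp with h | h <;> rcases h₂ p hp with h' | h' <;> simp [W, h, h']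
  have hle : 100 ≤ ∑ p ∈ univ.erase i₀, W p :=
    le_of_eq_of_le (by simp [W, hs₁, hs₂]) (single_le_sum hW (mem_erase.2 ⟨hs, mem_univ s⟩))
  have hWp (p : Fin 25) : W p = Z₁ p * Z₂ p - Z₁ p - Z₂ p + 1 := by
    simp only [W]
    ring
  simp only [hWp, sum_add_distrib, sum_sub_distrib, sum_const, card_erase_of_mem (mem_univ _),
    sum_erase_eq_sub horth, sum_erase_eq_sub hsum₁, sum_erase_eq_sub hsum₂, card_univ,
    Fintype.card_fin] at hle
  rw [← h₀] at hle
  rcases h₀' with h | h <;> rw [h] at hle <;> norm_num at hle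

/-- Up to sign each `Y i` has one of two shapes, and by pigeonhole two of the five share sign
and shape. -/
theorem false_of_five_orthogonal (Y : Fin 5 → Fin 25 → ℤ) {i₀ k l : Fin 25} (hk : k ≠ i₀)
    (hl : l ≠ i₀) (hkl : ∀ i, Y i k - Y i l = 10)
    (hcong : ∀ i p q, p ≠ i₀ → q ≠ i₀ → 10 ∣ Y i p - Y i q)
    (hcross : ∀ i p, p ≠ i₀ → 5 ∣ Y i p - Y i i₀ ∧ ¬ 10 ∣ Y i p - Y i i₀)
    (hsum : ∀ i, ∑ p, Y i p = 0) (hnorm : ∀ i, ∑ p, Y i p ^ 2 = 300)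
    (horth : ∀ i j, i ≠ j → ∑ p, Y i p * Y j p = 0) : False := by
  choose ε hε hεY hεY₀ using fun i =>
    exists_sign_of_ten_dvd (Y i) i₀ (hcong i) (hcross i) (hsum i) (hnorm i)
  obtain ⟨i, j, hij, htag⟩ := Fintype.exists_ne_map_eq_of_card_lt
    (fun i => (decide (ε i = 1), decide (ε i * Y i i₀ = 6))) (by simp)
  simp only [Prod.mk.injEq, decide_eq_decide] at htag
  have hεij : ε j = ε i := by rcases hε i with h | h <;> rcases hε j with h' | h' <;> simp_all
  have h₀ : ε i * Y i i₀ = ε i * Y j i₀ := by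
    rw [← hεij]
    rcases hεY₀ i with h | h <;> rcases hεY₀ j with h' | h' <;> simp_all
  have hscale (a b : Fin 5) : ∑ p, ε i * Y a p * (ε i * Y b p) = ε i ^ 2 * ∑ p, Y a p * Y b p := by
    rw [mul_sum]
    exact sum_congr rfl fun p _ => by ring
  have hsq : ε i ^ 2 = 1 := by rcases hε i with h | h <;> simp [h]
  have hsum' (a : Fin 5) : ∑ p, ε i * Y a p = 0 := by rw [← mul_sum, hsum, mul_zero]
  have horth' : ∑ p, ε i * Y i p * (ε i * Y j p) = 0 := by rw [hscale, horth i j hij, mul_zero]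
  have hY₁ := hεY i
  have hY₂ : ∀ p, p ≠ i₀ → ε i * Y j p = 1 ∨ ε i * Y j p = -9 := hεij ▸ hεY j
  rcases hε i with h | h
  · refine false_of_orthogonal hl hY₁ hY₂ ?_ ?_ h₀ (hεY₀ i) (hsum' i) (hsum' j) horth' <;>
      simp only [h, one_mul] at hY₁ hY₂ ⊢
    · have := hkl i; rcases hY₁ k hk with h | h <;> rcases hY₁ l hl with h' | h' <;> omega
    · have := hkl j; rcases hY₂ k hk with h | h <;> rcases hY₂ l hl with h' | h' <;> omega
  · refine false_of_orthogonal hk hY₁ hY₂ ?_ ?_ h₀ (hεY₀ i) (hsum' i) (hsum' j) horth' <;>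
      simp only [h, neg_one_mul, neg_eq_iff_eq_neg] at hY₁ hY₂ ⊢
    · have := hkl i; rcases hY₁ k hk with h | h <;> rcases hY₁ l hl with h' | h' <;> omega
    · have := hkl j; rcases hY₂ k hk with h | h <;> rcases hY₂ l hl with h' | h' <;> omega

theorem false_of_rat_coords (x : Fin 5 → Fin 25 → ℚ) {i₀ k l : Fin 25} (hk : k ≠ i₀)
    (hl : l ≠ i₀) (hkl : ∀ i, x i k - x i l = 1) (hsum : ∀ i, ∑ p, x i p = 0)
    (hnorm : ∀ i, x i ⬝ᵥ x i = 3) (horth : ∀ i j, i ≠ j → x i ⬝ᵥ x j = 0)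
    (hint : ∀ i p q, p ≠ i₀ → q ≠ i₀ → ∃ m : ℤ, x i p - x i q = m)
    (hhalf : ∀ i p q, ∃ m : ℤ, 2 * (x i p - x i q) = m)
    (hnot : ∀ i p, p ≠ i₀ → ¬ ∃ m : ℤ, x i p - x i i₀ = m) : False := by
  have hint10 (i : Fin 5) : IsIntVec (5 • (2 • x i)) := by
    refine isIntVec_five_smul (fun p q => ?_) ?_ ⟨12, ?_⟩
    · simpa [mul_sub] using hhalf i p q
    · simp [← mul_sum, hsum]
    · rw [smul_dotProduct, dotProduct_smul, hnorm]
      norm_num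
  choose Y hY using hint10
  have hY' (i : Fin 5) (p : Fin 25) : (Y i p : ℚ) = 10 * x i p := by
    rw [← hY, Pi.smul_apply, Pi.smul_apply, nsmul_eq_mul, nsmul_eq_mul]
    push_cast
    ring
  have hsub (i : Fin 5) (p q : Fin 25) : ((Y i p - Y i q : ℤ) : ℚ) = 10 * (x i p - x i q) := by
    push_cast
    rw [hY', hY']
    ring
  have hdot (i j : Fin 5) : ((∑ p, Y i p * Y j p : ℤ) : ℚ) = 100 * (x i ⬝ᵥ x j) := by
    push_cast
    simp only [hY', dotProduct, mul_sum]
    exact sum_congr rfl fun p _ => by ring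
  refine false_of_five_orthogonal Y hk hl (fun i => ?_) (fun i p q hp hq => ?_)
    (fun i p hp => ⟨?_, ?_⟩) (fun i => ?_) (fun i => ?_) (fun i j hij => ?_)
  · have : ((Y i k - Y i l : ℤ) : ℚ) = 10 := by rw [hsub, hkl, mul_one]
    exact_mod_cast this
  · exact (exists_intCast_eq_iff_dvd (by norm_num) (hsub i p q)).1 (hint i p q hp hq)
  · refine (exists_intCast_eq_iff_dvd (by norm_num) ((hsub i p i₀).trans ?_)).1 (hhalf i p i₀)
    ring
  · exact mt (exists_intCast_eq_iff_dvd (by norm_num) (hsub i p i₀)).2 (hnot i p hp)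
  · have : ((∑ p, Y i p : ℤ) : ℚ) = 0 := by push_cast; simp [hY', ← mul_sum, hsum]
    exact_mod_cast this
  · have : ((∑ p, Y i p * Y i p : ℤ) : ℚ) = 300 := by rw [hdot, hnorm]; norm_num
    simpa only [sq] using (by exact_mod_cast this : ∑ p, Y i p * Y i p = 300)
  · have : ((∑ p, Y i p * Y j p : ℤ) : ℚ) = 0 := by rw [hdot, horth i j hij, mul_zero]
    exact_mod_cast this

end IntegerVectors

theorem stmt2_general {V : Type*} [AddCommGroup V] [Module ℚ V]
    (B : V →ₗ[ℚ] V →ₗ[ℚ] ℚ) (hB : IsPosDefSymm B)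
    (N : Submodule ℤ V) (hN : IsOddNiemeier B N)
    (E₁ E₂ : Submodule ℤ V)
    (hE₁ : IsEvenNeighbor B N E₁) (hE₂ : IsEvenNeighbor B N E₂)
    (hr₁ : LatticeIsometric (fun x y => B x y) (stdDot 24) (rootSublattice B E₁) (latD 24))
    (hr₂ : LatticeIsometric (fun x y => B x y) (stdDot 25) (rootSublattice B E₂) (latA 24)) :
    ¬ ContainsLPlus B N := by
  rintro ⟨h, hhN, a, haN, hh2, hha, haa, horth⟩
  obtain ⟨f₁, hf₁⟩ := hr₁
  obtain ⟨f₂, hf₂⟩ := hr₂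
  obtain ⟨hNint, -, hodd, hrank⟩ := hN
  obtain ⟨i₀, hi₀⟩ := exists_isolated_index hB.1 hNint hodd hE₁ hE₂ f₁ hf₁ f₂ hf₂
  obtain ⟨F, hFB, hFsum, hFpull⟩ := exists_linearMap_isometry_of_latA hrank f₂ hf₂
  have hpair (i : Fin 5) (p q : Fin 25) :
      B (a i) (pull f₂ (aRoot p q)) = F (a i) p - F (a i) q := by
    simp [hFpull, aRoot, dotProduct_sub]
  obtain ⟨k, l, hkl, rfl⟩ := exists_pull_aRoot_eq f₂ hf₂
    (mem_of_isEvenNeighbor hB.1 hNint hodd hE₂ hhN ⟨1, by rw [hh2]; norm_num⟩) hh2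
  have hk : k ≠ i₀ := fun hk => hkl (hk.trans ((hi₀ k l).1 hhN |>.1 hk).symm)
  have hl : l ≠ i₀ := fun hl => hkl (((hi₀ k l).1 hhN |>.2 hl).trans hl.symm)
  have hx (i : Fin 5) := int_apply_pull_aRoot hB.1 hNint hodd hE₂ f₂ hi₀ (haN i)
    ⟨1, by rw [haa]; norm_num⟩
  refine false_of_rat_coords (fun i => F (a i)) hk hl (fun i => ?_) (fun i => hFsum _)
    (fun i => by rw [hFB, haa]) (fun i j hij => by rw [hFB, horth i j hij])
    (fun i p q hp hq => ?_) (fun i p q => ?_) (fun i p hp => ?_)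
  · rw [← hpair, hB.1, hha]
  · simpa [hpair] using (hx i).1 p q hp hq
  · simpa [hpair] using (hx i).2.1 p q
  · simpa [hpair] using (hx i).2.2 p hp

/-- An odd Niemeier lattice of minimum norm 2 whose two even neighbors have root
sublattices isometric to `D₂₄` and `A₂₄` respectively does not contain `L⁺`. -/
theorem stmt2 {V : Type*} [AddCommGroup V] [Module ℚ V]
    (B : V →ₗ[ℚ] V →ₗ[ℚ] ℚ) (hB : IsPosDefSymm B)
    (N : Submodule ℤ V) (hN : IsOddNiemeier B N)
    (hmin : HasMinNorm B N 2)
    (E₁ E₂ : Submodule ℤ V) (hne : E₁ ≠ E₂)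
    (hE₁ : IsEvenNeighbor B N E₁) (hE₂ : IsEvenNeighbor B N E₂)
    (hr₁ : LatticeIsometric (fun x y => B x y) (stdDot 24) (rootSublattice B E₁) (latD 24))
    (hr₂ : LatticeIsometric (fun x y => B x y) (stdDot 25) (rootSublattice B E₂) (latA 24)) :
    ¬ ContainsLPlus B N :=
  stmt2_general B hB N hN E₁ E₂ hE₁ hE₂ hr₁ hr₂

end Niemeier
end

section
/- Let N be an odd Niemeier lattice admitting an even neighbor E whose minimum norm is at least 4 (i.e., E contains no roots). Then N does not contain a sublattice isometric to L⁺. -/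
open scoped BigOperators

namespace Niemeier

variable {V : Type*} [AddCommGroup V] [Module ℚ V]
variable {W : Type*} [AddCommGroup W] [Module ℚ W]

/-- An odd Niemeier lattice admitting an even neighbor of minimum norm at least 4
does not contain a sublattice isometric to `L⁺`. -/
theorem stmt8 {V : Type*} [AddCommGroup V] [Module ℚ V]
    (B : V →ₗ[ℚ] V →ₗ[ℚ] ℚ) (hB : IsPosDefSymm B)
    (N : Submodule ℤ V) (hN : IsOddNiemeier B N)
    (E : Submodule ℤ V) (hE : IsEvenNeighbor B N E)
    (hmin : ∀ v ∈ E, v ≠ 0 → 4 ≤ B v v) :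
    ¬ ContainsLPlus B N := by
  rintro ⟨h, hhN, a, haN, hh2, hha, haa, hortho⟩
  obtain ⟨hNlat, hNuni, ⟨v, hvN, nv, hvodd⟩, hrk⟩ := hN
  obtain ⟨hElat, hEuni, hEeven, ⟨⟨hle, w, hwN, hwD, hcover⟩, _⟩⟩ := hE
  have hint : ∀ x ∈ N, ∀ y ∈ N, ∃ m : ℤ, B x y = m := fun x hx y hy =>
    hNlat.integral hx y hy
  -- norms of elements of N ⊓ E are even
  have heven : ∀ x ∈ N ⊓ E, ∃ k : ℤ, B x x = 2 * k := fun x hx =>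
    hEeven x hx.2
  -- w has odd norm
  obtain ⟨mw, hmw⟩ := hint w hwN w hwN
  have hexp : ∀ x ∈ N, B (x - w) (x - w) = B x x - 2 * B x w + B w w := by
    intro x hx
    simp only [map_sub, LinearMap.sub_apply]
    rw [hB.1 w x]
    ring
  have hwodd : ∃ k : ℤ, mw = 2 * k + 1 := by
    rcases hcover v hvN with hv | hv
    · obtain ⟨k, hk⟩ := heven v hv
      rw [hvodd] at hk
      have : (2 * nv + 1 : ℤ) = (2 * k : ℤ) := by exact_mod_cast hk
      exact absurd this (by omega)
    · obtain ⟨k, hk⟩ := heven _ hv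
      obtain ⟨m, hm⟩ := hint v hvN w hwN
      rw [hexp v hvN, hvodd, hm, hmw] at hk
      have : ((2 * nv + 1 : ℤ) : ℚ) - 2 * (m : ℚ) + (mw : ℚ) = ((2 * k : ℤ) : ℚ) := by
        push_cast at hk ⊢; linarith
      have : (2 * nv + 1 : ℤ) - 2 * m + mw = 2 * k := by exact_mod_cast this
      exact ⟨k + m - nv - 1, by omega⟩
  -- h has norm 2, hence even, hence lies in N ⊓ E
  have hne : h ≠ 0 := by
    intro h0
    rw [h0] at hh2
    simp at hh2
  have hhE : h ∈ E := by
    rcases hcover h hhN with hv | hv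
    · exact hv.2
    · exfalso
      obtain ⟨k, hk⟩ := heven _ hv
      obtain ⟨m, hm⟩ := hint h hhN w hwN
      rw [hexp h hhN, hh2, hm, hmw] at hk
      have h1 : (2 : ℚ) - 2 * (m : ℚ) + (mw : ℚ) = ((2 * k : ℤ) : ℚ) := by
        push_cast at hk ⊢; linarith
      have h2 : (2 : ℤ) - 2 * m + mw = 2 * k := by exact_mod_cast h1
      obtain ⟨k', hk'⟩ := hwodd
      omega
  have := hmin h hhE hne
  rw [hh2] at this
  norm_num at this

end Niemeier
end

section
/- Let N be an odd Niemeier lattice containing a vector e with (e,e) = 1, and let A be an even neighbor of N. Then the reflection s_e : x ↦ x − 2(x,e)e maps N onto N, fixes the even sublattice N₀ = {x ∈ N : (x,x) even} setwise, and maps A onto an even neighbor of N distinct from A. -/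
open scoped BigOperators

namespace Niemeier

variable {V : Type*} [AddCommGroup V] [Module ℚ V]
variable {W : Type*} [AddCommGroup W] [Module ℚ W]

lemma mem_dualLattice {V : Type*} [AddCommGroup V] [Module ℚ V]
    {B : V →ₗ[ℚ] V →ₗ[ℚ] ℚ} {L : Submodule ℤ V} {x : V} :
    x ∈ dualLattice B L ↔ ∀ y ∈ L, ∃ n : ℤ, B x y = n := Iff.rfl

/-- If `N` is an odd Niemeier lattice containing a vector `e` of norm 1 and `A`
is an even neighbor of `N`, then the reflection `x ↦ x - 2(x,e)e` maps `N` onto `N`, fixes the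
even sublattice (as a set) setwise, and maps `A` onto an even neighbor of `N` distinct
from `A`. -/
theorem stmt10 {V : Type*} [AddCommGroup V] [Module ℚ V]
    (B : V →ₗ[ℚ] V →ₗ[ℚ] ℚ) (hB : IsPosDefSymm B)
    (N : Submodule ℤ V) (hN : IsOddNiemeier B N)
    (e : V) (he : e ∈ N) (hee : B e e = 1)
    (A : Submodule ℤ V) (hA : IsEvenNeighbor B N A) :
    (fun x => x - (2 * B x e) • e) '' (N : Set V) = (N : Set V) ∧
    (fun x => x - (2 * B x e) • e) '' evenSet B N = evenSet B N ∧
    ∃ A' : Submodule ℤ V, IsEvenNeighbor B N A' ∧ A' ≠ A ∧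
      (fun x => x - (2 * B x e) • e) '' (A : Set V) = (A' : Set V) := by
  classical
  obtain ⟨hBsymm, hBpos⟩ := hB
  obtain ⟨hNint, hNuni, hNodd, hrank⟩ := hN
  obtain ⟨hAint, hAuni, hAeven, hANnbr⟩ := hA
  -- basic computations about the reflection
  have hfe : ∀ x : V, B (x - (2 * B x e) • e) e = - B x e := by
    intro x
    simp only [map_sub, map_smul, LinearMap.sub_apply, LinearMap.smul_apply, smul_eq_mul, hee]
    ring
  have hinv : ∀ x : V,
      (x - (2 * B x e) • e) - (2 * B (x - (2 * B x e) • e) e) • e = x := by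
    intro x
    rw [hfe]
    module
  have hiso : ∀ x y : V,
      B (x - (2 * B x e) • e) (y - (2 * B y e) • e) = B x y := by
    intro x y
    simp only [map_sub, map_smul, LinearMap.sub_apply, LinearMap.smul_apply, smul_eq_mul, hee,
      hBsymm e y]
    ring
  -- the reflection as a linear map
  let fq : V →ₗ[ℚ] V :=
    { toFun := fun x => x - (2 * B x e) • e
      map_add' := by
        intro x y
        simp only [map_add, LinearMap.add_apply]
        module
      map_smul' := by
        intro c x
        simp only [map_smul, LinearMap.smul_apply, smul_eq_mul, RingHom.id_apply]
        module }
  let fl : V →ₗ[ℤ] V := fq.restrictScalars ℤ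
  have hflapp : ∀ x : V, fl x = x - (2 * B x e) • e := fun _ => rfl
  have hinvf : ∀ x : V, fl (fl x) = x := hinv
  have hinj : Function.Injective fl := Function.LeftInverse.injective hinvf
  have hfN : ∀ x ∈ N, x - (2 * B x e) • e ∈ N := by
    intro x hx
    obtain ⟨n, hn⟩ := hNint.integral hx e he
    have h2 : (2 * B x e) • e = (2 * n : ℤ) • e := by
      rw [hn, show ((2 : ℚ) * (n : ℚ)) = (((2 * n : ℤ) : ℚ)) by push_cast; ring,
        Int.cast_smul_eq_zsmul]
    rw [h2]
    exact N.sub_mem hx (N.smul_mem _ he)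
  have himg : ∀ S : Set V, (∀ x ∈ S, x - (2 * B x e) • e ∈ S) →
      (fun x => x - (2 * B x e) • e) '' S = S := by
    intro S hS
    apply Set.Subset.antisymm
    · rintro _ ⟨x, hx, rfl⟩
      exact hS x hx
    · intro x hx
      exact ⟨x - (2 * B x e) • e, hS x hx, hinv x⟩
  have himgN : (fun x => x - (2 * B x e) • e) '' (N : Set V) = (N : Set V) := himg _ hfN
  have himgEv : (fun x => x - (2 * B x e) • e) '' evenSet B N = evenSet B N := by
    apply himg
    rintro x ⟨hxN, n, hn⟩
    exact ⟨hfN x hxN, n, by rw [hiso x x]; exact hn⟩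
  refine ⟨himgN, himgEv, Submodule.map fl A, ?_, ?_, ?_⟩
  · -- IsEvenNeighbor
    have hmapN : Submodule.map fl N = N := by
      apply SetLike.coe_injective
      rw [Submodule.map_coe]
      exact himgN
    have hinfmap : N ⊓ Submodule.map fl A = Submodule.map fl (N ⊓ A) := by
      ext x
      simp only [Submodule.mem_inf, Submodule.mem_map]
      constructor
      · rintro ⟨hxN, a, haA, hfa⟩
        refine ⟨a, ⟨?_, haA⟩, hfa⟩
        have : a = fl x := by rw [← hfa, hinvf]
        rw [this]
        exact hfN x hxN
      · rintro ⟨a, ⟨haN, haA⟩, hfa⟩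
        exact ⟨hfa ▸ hfN a haN, a, haA, hfa⟩
    have hIT : ∀ D L : Submodule ℤ V, IndexTwo D L →
        IndexTwo (D.map fl) (L.map fl) := by
      rintro D L ⟨hDL, a, haL, haD, hcov⟩
      refine ⟨Submodule.map_mono hDL, fl a, Submodule.mem_map_of_mem haL, ?_, ?_⟩
      · rintro ⟨d, hdD, hd⟩
        exact haD (hinj hd ▸ hdD)
      · rintro x ⟨y, hyL, rfl⟩
        rcases hcov y hyL with h | h
        · exact Or.inl (Submodule.mem_map_of_mem h)
        · exact Or.inr (by rw [← map_sub]; exact Submodule.mem_map_of_mem h)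
    refine ⟨⟨hAint.fg.map fl, ?_, ?_⟩, ?_, ?_, ?_, ?_⟩

    · -- spans
      rw [Submodule.map_coe]
      have h1 : (⇑fl) '' (A : Set V) = (⇑fq) '' (A : Set V) := rfl
      rw [h1, Submodule.span_image, hAint.spans, Submodule.map_top, LinearMap.range_eq_top]
      exact fun x => ⟨fq x, hinv x⟩
    · -- integral
      rintro x ⟨a, haA, rfl⟩ y ⟨b, hbA, rfl⟩
      obtain ⟨n, hn⟩ := hAint.integral haA b hbA
      exact ⟨n, by rw [hflapp, hflapp, hiso]; exact hn⟩
    · -- unimodular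
      apply le_antisymm
      · rintro x ⟨a, haA, rfl⟩ y hy
        rcases hy with ⟨b, hbA, rfl⟩
        obtain ⟨n, hn⟩ := hAint.integral haA b hbA
        exact ⟨n, by rw [hflapp, hflapp, hiso]; exact hn⟩
      · intro x hx
        have hxA : fl x ∈ A := by
          rw [hAuni]
          intro y hy
          obtain ⟨n, hn⟩ := hx (fl y) (Submodule.mem_map_of_mem hy)
          refine ⟨n, ?_⟩
          have h1 : B (fl x) y = B (fl x) (fl (fl y)) := by rw [hinvf]
          rw [h1, hflapp x, hflapp (fl y), hiso]
          exact hn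
        exact ⟨fl x, hxA, hinvf x⟩
    · -- even
      rintro v ⟨a, haA, rfl⟩
      obtain ⟨n, hn⟩ := hAeven a haA
      exact ⟨n, by rw [hflapp, hiso]; exact hn⟩
    · -- neighbors 1
      have h1 := hIT _ _ hANnbr.1
      rw [hmapN] at h1
      rwa [← hinfmap] at h1
    · -- neighbors 2
      have h2 := hIT _ _ hANnbr.2
      rwa [← hinfmap] at h2
  · -- A' ≠ A
    obtain ⟨hDle, a₀, ha₀N, ha₀D, hcov⟩ := hANnbr.1
    obtain ⟨v, hvN, k, hvk⟩ := hNodd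
    have heA : e ∉ A := by
      intro heA
      obtain ⟨n, hn⟩ := hAeven e heA
      rw [hee] at hn
      have : (1 : ℤ) = 2 * n := by exact_mod_cast hn
      omega
    have hexp : ∀ x y : V, B (x - y) (x - y) = B x x - 2 * B x y + B y y := by
      intro x y
      simp only [map_sub, LinearMap.sub_apply, hBsymm y x]
      ring
    have hvD : v ∉ N ⊓ A := by
      intro hv
      obtain ⟨n, hn⟩ := hAeven v hv.2
      rw [hvk] at hn
      have : (2 * k + 1 : ℤ) = 2 * n := by exact_mod_cast hn
      omega
    have hva : v - a₀ ∈ N ⊓ A := (hcov v hvN).resolve_left hvD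
    obtain ⟨q, hq⟩ := hNint.integral ha₀N a₀ ha₀N
    obtain ⟨p, hp⟩ := hNint.integral hvN a₀ ha₀N
    obtain ⟨m, hm⟩ := hAeven _ hva.2
    have hqodd : ¬ ∃ t : ℤ, q = 2 * t := by
      rw [hexp, hvk, hp, hq] at hm
      have h2 : (2 * k + 1) - 2 * p + q = 2 * m := by exact_mod_cast hm
      rintro ⟨t, rfl⟩
      omega
    have h2eN : (2 : ℤ) • e ∈ N := N.smul_mem _ he
    have hB2e : ∀ y : V, B ((2 : ℤ) • e) y = 2 * B e y := by
      intro y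
      rw [map_zsmul, LinearMap.smul_apply, zsmul_eq_mul]
      push_cast
      ring
    have hB2e' : B e ((2 : ℤ) • e) = 2 * B e e := by
      rw [map_zsmul, zsmul_eq_mul]
      push_cast
      ring
    have h2e : (2 : ℤ) • e ∈ A := by
      rcases hcov _ h2eN with h | h
      · exact h.2
      · exfalso
        obtain ⟨m', hm'⟩ := hAeven _ h.2
        obtain ⟨r, hr⟩ := hNint.integral h2eN a₀ ha₀N
        rw [hexp, hq, hr, hB2e, hB2e', hee] at hm'
        have : 2 * 2 * 1 - 2 * r + q = 2 * m' := by exact_mod_cast hm'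
        exact hqodd ⟨m' - 2 + r, by omega⟩
    have hae : ∃ a ∈ A, ¬ ∃ n : ℤ, B a e = n := by
      by_contra hcon
      push_neg at hcon
      apply heA
      rw [hAuni]
      intro y hy
      obtain ⟨n, hn⟩ := hcon y hy
      exact ⟨n, by rw [hBsymm e y]; exact hn⟩
    obtain ⟨a, haA, haint⟩ := hae
    obtain ⟨m₀, hm₀⟩ := hAint.integral haA _ h2e
    have hm₀' : 2 * B a e = (m₀ : ℚ) := by
      rw [← hm₀, map_zsmul, zsmul_eq_mul]
      push_cast
      ring
    have hm₀odd : ¬ ∃ t : ℤ, m₀ = 2 * t := by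
      rintro ⟨t, rfl⟩
      apply haint
      refine ⟨t, ?_⟩
      have : (2 : ℚ) * B a e = 2 * (t : ℚ) := by rw [hm₀']; push_cast; ring
      linarith
    intro hEq
    apply heA
    have hfaA : a - (2 * B a e) • e ∈ A := by
      have : fl a ∈ Submodule.map fl A := Submodule.mem_map_of_mem haA
      rw [hEq] at this
      exact this
    have hmeA : m₀ • e ∈ A := by
      have : (2 * B a e) • e = m₀ • e := by
        rw [hm₀', Int.cast_smul_eq_zsmul]
      rw [← this]
      have := A.sub_mem haA hfaA
      simpa using this
    obtain ⟨t, ht⟩ : ∃ t : ℤ, m₀ = 2 * t + 1 := by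
      rcases Int.even_or_odd m₀ with ⟨t, ht⟩ | ⟨t, ht⟩
      · exact absurd ⟨t, by omega⟩ hm₀odd
      · exact ⟨t, ht⟩
    have h1 : m₀ - t * 2 = 1 := by omega
    have : e = m₀ • e - t • ((2 : ℤ) • e) := by
      rw [smul_smul, ← sub_smul, h1, one_smul]
    rw [this]
    exact A.sub_mem hmeA (A.smul_mem _ h2e)
  · -- image
    rw [Submodule.map_coe]
    rfl

end Niemeier
end

section
/- Let N be an odd Niemeier lattice of minimum norm 1 (i.e., N contains a vector e with (e,e) = 1). Then any two even neighbors of N are isometric. -/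
open scoped BigOperators

namespace Niemeier

variable {V : Type*} [AddCommGroup V] [Module ℚ V]
variable {W : Type*} [AddCommGroup W] [Module ℚ W]

/-- Any two even neighbors of an odd Niemeier lattice of minimum norm 1 are
isometric. -/
theorem stmt11 {V : Type*} [AddCommGroup V] [Module ℚ V]
    (B : V →ₗ[ℚ] V →ₗ[ℚ] ℚ) (hB : IsPosDefSymm B)
    (N : Submodule ℤ V) (hN : IsOddNiemeier B N)
    (hmin : HasMinNorm B N 1)
    (E₁ E₂ : Submodule ℤ V)
    (hE₁ : IsEvenNeighbor B N E₁) (hE₂ : IsEvenNeighbor B N E₂) :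
    LatticeIsometric (fun x y => B x y) (fun x y => B x y) E₁ E₂ := by
  classical
  obtain ⟨hNint, hNuni, hNodd, hrank⟩ := hN
  obtain ⟨⟨e, heN, he0, hee⟩, hminlb⟩ := hmin
  obtain ⟨hE₁int, hE₁uni, hE₁even, hE₁nbN, hE₁nbE⟩ := hE₁
  obtain ⟨hE₂int, hE₂uni, hE₂even, hE₂nbN, hE₂nbE⟩ := hE₂
  have hsymm : ∀ x y, B x y = B y x := hB.1
  have memdual : ∀ (L : Submodule ℤ V) (x : V),
      x ∈ dualLattice B L ↔ ∀ y ∈ L, ∃ n : ℤ, B x y = n := fun _ _ => Iff.rfl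
  have expandS : ∀ u v : V, B (u - v) (u - v) = B u u - 2 * B u v + B v v := by
    intro u v
    simp only [map_sub, LinearMap.sub_apply]
    rw [hsymm v u]; ring
  have expandA : ∀ u v : V, B (u + v) (u + v) = B u u + 2 * B u v + B v v := by
    intro u v
    simp only [map_add, LinearMap.add_apply]
    rw [hsymm v u]; ring
  have hNdual : N = dualLattice B N := hNuni
  have hE₁dual : E₁ = dualLattice B E₁ := hE₁uni
  have hE₂dual : E₂ = dualLattice B E₂ := hE₂uni
  have intN : ∀ x ∈ N, ∀ y ∈ N, ∃ m : ℤ, B x y = m := by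
    intro x hx y hy
    rw [hNdual] at hx
    exact (memdual N x).mp hx y hy
  have intE₁ : ∀ x ∈ E₁, ∀ y ∈ E₁, ∃ m : ℤ, B x y = m := by
    intro x hx
    rw [hE₁dual] at hx
    exact (memdual E₁ x).mp hx
  have intE₂ : ∀ x ∈ E₂, ∀ y ∈ E₂, ∃ m : ℤ, B x y = m := by
    intro x hx
    rw [hE₂dual] at hx
    exact (memdual E₂ x).mp hx
  -- every even-norm vector of N lies in any even neighbor
  have evenIn : ∀ (E : Submodule ℤ V), IsEvenLat B E → IndexTwo (N ⊓ E) N →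
      ∀ x ∈ N, (∃ n : ℤ, B x x = 2 * (n : ℚ)) → x ∈ E := by
    rintro E hEeven ⟨hle, a, haN, haD, hdich⟩ x hxN ⟨n, hn⟩
    rcases hdich x hxN with hx | hx
    · exact (Submodule.mem_inf.mp hx).2
    · exfalso
      obtain ⟨hxaN, hxaE⟩ := Submodule.mem_inf.mp hx
      obtain ⟨m, hm⟩ := intN x hxN (x - a) hxaN
      obtain ⟨p, hp⟩ := hEeven (x - a) hxaE
      have haa : B a a = 2 * ((n : ℚ) - m + p) := by
        have h := expandS x (x - a)
        rw [sub_sub_cancel] at h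
        rw [h, hn, hm, hp]; ring
      rcases hdich e heN with he | he
      · obtain ⟨q, hq⟩ := hEeven e (Submodule.mem_inf.mp he).2
        rw [hee] at hq
        have : (1 : ℤ) = 2 * q := by exact_mod_cast hq
        omega
      · obtain ⟨heaN, heaE⟩ := Submodule.mem_inf.mp he
        obtain ⟨r, hr⟩ := hEeven (e - a) heaE
        obtain ⟨s, hs⟩ := intN (e - a) heaN a haN
        have h := expandA (e - a) a
        rw [sub_add_cancel] at h
        rw [hee, hr, hs, haa] at h
        have h' : (1 : ℤ) = 2 * r + 2 * s + 2 * (n - m + p) := by exact_mod_cast h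
        omega
  have memE₁ : ∀ x ∈ N, (∃ n : ℤ, B x x = 2 * (n : ℚ)) → x ∈ E₁ :=
    fun x hx h => evenIn E₁ hE₁even hE₁nbN x hx h
  have memE₂ : ∀ x ∈ N, (∃ n : ℤ, B x x = 2 * (n : ℚ)) → x ∈ E₂ :=
    fun x hx h => evenIn E₂ hE₂even hE₂nbN x hx h
  have hN0N : ∀ y ∈ N ⊓ E₁, y ∈ N := fun y hy => (Submodule.mem_inf.mp hy).1
  have hN0E₁ : ∀ y ∈ N ⊓ E₁, y ∈ E₁ := fun y hy => (Submodule.mem_inf.mp hy).2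
  have hN0E₂ : ∀ y ∈ N ⊓ E₁, y ∈ E₂ := by
    intro y hy
    obtain ⟨h1, h2⟩ := Submodule.mem_inf.mp hy
    exact memE₂ y h1 (hE₁even y h2)
  have hEq : N ⊓ E₂ = N ⊓ E₁ := by
    apply le_antisymm
    · intro x hx
      obtain ⟨h1, h2⟩ := Submodule.mem_inf.mp hx
      exact Submodule.mem_inf.mpr ⟨h1, memE₁ x h1 (hE₂even x h2)⟩
    · intro x hx
      exact Submodule.mem_inf.mpr ⟨hN0N x hx, hN0E₂ x hx⟩
  have h2e : e + e ∈ N ⊓ E₁ := by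
    have hN' : e + e ∈ N := add_mem heN heN
    refine Submodule.mem_inf.mpr ⟨hN', memE₁ _ hN' ⟨2, ?_⟩⟩
    rw [expandA e e, hee]; norm_num
  have podd : ∀ x ∈ N, x ∉ N ⊓ E₁ → x - e ∈ N ⊓ E₁ := by
    intro x hxN hnot
    obtain ⟨m, hm⟩ := intN x hxN x hxN
    obtain ⟨p, hp⟩ := intN x hxN e heN
    rcases Int.even_or_odd m with ⟨k, hk⟩ | ⟨k, hk⟩
    · exfalso
      exact hnot (Submodule.mem_inf.mpr ⟨hxN, memE₁ x hxN
        ⟨k, by rw [hm, hk]; push_cast; ring⟩⟩)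
    · have hxe : x - e ∈ N := sub_mem hxN heN
      refine Submodule.mem_inf.mpr ⟨hxe, memE₁ _ hxe ⟨k + 1 - p, ?_⟩⟩
      rw [expandS x e, hm, hp, hee, hk]; push_cast; ring
  obtain ⟨hle₁, g₁, hg₁E, hg₁n, hdich₁⟩ := hE₁nbE
  obtain ⟨hle₂, g₂, hg₂E, hg₂n, hdich₂⟩ := hE₂nbE
  rw [hEq] at hg₂n hdich₂
  have half : ∀ g : V, (∀ y ∈ N ⊓ E₁, ∃ m : ℤ, B g y = m) → g ∉ N ⊓ E₁ →
      (g ∈ N → g ∈ N ⊓ E₁) → ∃ k : ℤ, 2 * B g e = 2 * (k : ℚ) + 1 := by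
    intro g hint hnot hback
    obtain ⟨m, hm⟩ := hint (e + e) h2e
    have hadd : B g (e + e) = B g e + B g e := map_add _ _ _
    have h2 : 2 * B g e = (m : ℚ) := by linarith
    rcases Int.even_or_odd m with ⟨k, hk⟩ | ⟨k, hk⟩
    · exfalso
      have hge : B g e = (k : ℚ) := by rw [hk] at h2; push_cast at h2; linarith
      have hgN : g ∈ N := by
        rw [hNdual, memdual]
        intro y hy
        by_cases hy0 : y ∈ N ⊓ E₁
        · exact hint y hy0
        · obtain ⟨q, hq⟩ := hint (y - e) (podd y hy hy0)
          refine ⟨q + k, ?_⟩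
          have hmain : B g (y - e) = B g y - B g e := map_sub _ _ _
          push_cast
          linarith
      exact hnot (hback hgN)
    · exact ⟨k, by rw [h2, hk]; push_cast; ring⟩
  have pair₁ : ∀ y ∈ N ⊓ E₁, ∃ m : ℤ, B g₁ y = m :=
    fun y hy => intE₁ g₁ hg₁E y (hN0E₁ y hy)
  have pair₂ : ∀ y ∈ N ⊓ E₁, ∃ m : ℤ, B g₂ y = m :=
    fun y hy => intE₂ g₂ hg₂E y (hN0E₂ y hy)
  obtain ⟨k₁, hk₁⟩ := half g₁ pair₁ hg₁n (fun h => Submodule.mem_inf.mpr ⟨h, hg₁E⟩)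
  obtain ⟨k₂, hk₂⟩ := half g₂ pair₂ hg₂n
    (fun h => hEq ▸ Submodule.mem_inf.mpr ⟨h, hg₂E⟩)
  have hde : B (g₁ - g₂) e = (k₁ : ℚ) - k₂ := by
    simp only [map_sub, LinearMap.sub_apply]
    linarith
  have hdN : g₁ - g₂ ∈ N := by
    rw [hNdual, memdual]
    intro y hy
    by_cases hy0 : y ∈ N ⊓ E₁
    · obtain ⟨m₁, hm₁⟩ := pair₁ y hy0
      obtain ⟨m₂, hm₂⟩ := pair₂ y hy0
      refine ⟨m₁ - m₂, ?_⟩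
      simp only [map_sub, LinearMap.sub_apply]
      push_cast
      linarith
    · have hye := podd y hy hy0
      obtain ⟨m₁, hm₁⟩ := pair₁ (y - e) hye
      obtain ⟨m₂, hm₂⟩ := pair₂ (y - e) hye
      refine ⟨m₁ - m₂ + (k₁ - k₂), ?_⟩
      have e₁ : B g₁ (y - e) = B g₁ y - B g₁ e := map_sub (B g₁) y e
      have e₂ : B g₂ (y - e) = B g₂ y - B g₂ e := map_sub (B g₂) y e
      simp only [map_sub, LinearMap.sub_apply]
      push_cast
      linarith
  by_cases hd : g₁ - g₂ ∈ N ⊓ E₁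
  · -- the two even neighbors coincide
    have hEE : E₁ = E₂ := by
      apply le_antisymm
      · intro x hx
        rcases hdich₁ x hx with h | h
        · exact hN0E₂ x h
        · have hxeq : x = (x - g₁) + (g₁ - g₂) + g₂ := by abel
          rw [hxeq]
          exact add_mem (add_mem (hN0E₂ _ h) (hN0E₂ _ hd)) hg₂E
      · intro x hx
        rcases hdich₂ x hx with h | h
        · exact hN0E₁ x h
        · have hxeq : x = (x - g₂) - (g₁ - g₂) + g₁ := by abel
          rw [hxeq]
          exact add_mem (sub_mem (hN0E₁ _ h) (hN0E₁ _ hd)) hg₁E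
    subst hEE
    exact ⟨LinearEquiv.refl ℤ E₁, fun x y => rfl⟩
  · -- the reflection in e maps E₁ onto E₂
    have hw : g₁ - g₂ - e ∈ N ⊓ E₁ := podd _ hdN hd
    set σ : V →ₗ[ℚ] V :=
      LinearMap.id - (LinearMap.toSpanSingleton ℚ V e).comp ((2 : ℚ) • B.flip e)
      with hσdef
    have hσ : ∀ x, σ x = x - (2 * B x e) • e := by
      intro x
      rw [hσdef]
      simp only [LinearMap.sub_apply, LinearMap.id_apply, LinearMap.comp_apply,
        LinearMap.smul_apply, LinearMap.flip_apply, LinearMap.toSpanSingleton_apply,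
        smul_eq_mul]
    have keyN0 : ∀ x ∈ N ⊓ E₁, σ x ∈ N ⊓ E₁ := by
      intro x hx
      obtain ⟨p, hp⟩ := intN x (hN0N x hx) e heN
      have hval : σ x = x - p • (e + e) := by
        rw [hσ, hp, ← Int.cast_smul_eq_zsmul ℚ p (e + e)]
        module
      rw [hval]
      exact sub_mem hx (zsmul_mem h2e p)
    have keyg : ∀ (x g gG : V) (G : Submodule ℤ V) (k : ℤ),
        x - g ∈ N ⊓ E₁ → g - gG - e ∈ N ⊓ E₁ → gG ∈ G → (∀ y ∈ N ⊓ E₁, y ∈ G) →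
        2 * B g e = 2 * (k : ℚ) + 1 → σ x ∈ G := by
      intro x g gG G k hxg hw' hgG hN0G hk
      obtain ⟨p, hp⟩ := intN (x - g) (hN0N _ hxg) e heN
      have hsubB : B (x - g) e = B x e - B g e := by
        simp only [map_sub, LinearMap.sub_apply]
      have hge : B g e = (k : ℚ) + 1 / 2 := by linarith
      have hBx : B x e = (p : ℚ) + k + 1 / 2 := by linarith
      have hval : σ x = (x - g) + (g - gG - e) + gG - (p + k) • (e + e) := by
        rw [hσ, hBx, ← Int.cast_smul_eq_zsmul ℚ (p + k) (e + e)]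
        push_cast
        module
      rw [hval]
      exact sub_mem (add_mem (add_mem (hN0G _ hxg) (hN0G _ hw')) hgG)
        (zsmul_mem (hN0G _ h2e) _)
    have hmem₁ : ∀ x ∈ E₁, σ x ∈ E₂ := by
      intro x hx
      rcases hdich₁ x hx with h | h
      · exact hN0E₂ _ (keyN0 x h)
      · exact keyg x g₁ g₂ E₂ k₁ h hw hg₂E hN0E₂ hk₁
    have hw' : g₂ - g₁ - e ∈ N ⊓ E₁ := by
      have heq : g₂ - g₁ - e = -(g₁ - g₂ - e) - (e + e) := by abel
      rw [heq]
      exact sub_mem (neg_mem hw) h2e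
    have hmem₂ : ∀ x ∈ E₂, σ x ∈ E₁ := by
      intro x hx
      rcases hdich₂ x hx with h | h
      · exact hN0E₁ _ (keyN0 x h)
      · exact keyg x g₂ g₁ E₁ k₂ h hw' hg₁E hN0E₁ hk₂
    have hinv : ∀ x, σ (σ x) = x := by
      intro x
      rw [hσ, hσ]
      simp only [map_sub, map_smul, LinearMap.sub_apply, LinearMap.smul_apply,
        smul_eq_mul, hee, mul_one]
      module
    have hiso : ∀ u v : V, B (σ u) (σ v) = B u v := by
      intro u v
      rw [hσ, hσ]
      simp only [map_sub, map_smul, LinearMap.sub_apply, LinearMap.smul_apply,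
        smul_eq_mul, hee, mul_one]
      rw [hsymm e v]
      ring
    have hmem₁' : ∀ x ∈ E₁, (σ.restrictScalars ℤ) x ∈ E₂ := hmem₁
    have hmem₂' : ∀ x ∈ E₂, (σ.restrictScalars ℤ) x ∈ E₁ := hmem₂
    refine ⟨LinearEquiv.ofLinear ((σ.restrictScalars ℤ).restrict hmem₁')
      ((σ.restrictScalars ℤ).restrict hmem₂') ?_ ?_, ?_⟩
    · apply LinearMap.ext
      intro x
      apply Subtype.ext
      simp only [LinearMap.comp_apply, LinearMap.restrict_coe_apply,
        LinearMap.coe_restrictScalars, LinearMap.id_coe, id_eq]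
      exact hinv x
    · apply LinearMap.ext
      intro x
      apply Subtype.ext
      simp only [LinearMap.comp_apply, LinearMap.restrict_coe_apply,
        LinearMap.coe_restrictScalars, LinearMap.id_coe, id_eq]
      exact hinv x
    · intro x y
      simp only [LinearEquiv.ofLinear_apply, LinearMap.restrict_coe_apply,
        LinearMap.coe_restrictScalars]
      exact hiso x y

end Niemeier
end
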